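/- arXiv:2109.10323 — 9 statements merged into one kernel-verified Lean document; each statement's English description precedes it below -/
import Mathlib

section
/- Let E ⊂ ℝⁿ be a convex body symmetric about 0, V a subspace, and x₀ a point in the image of (1/2)E under orthogonal projection Q onto V⊥. Then the slice E ∩ (x₀ + V) has d-dimensional measure at least 2^{−d} · m_d(E ∩ V), where d = dim V. -/
open MeasureTheory
open scoped ENNReal Pointwise

/-!
Writing `x₀ = Q (x₁ / 2)` with `x₁ ∈ E`, the homothety `x ↦ (x + x₁) / 2` of ratio `1/2` centred
at `x₁` maps `E` into itself by convexity and `V` into `x₀ + V`, because `x₁ / 2 - x₀` is the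
projection of `x₁ / 2` onto `V`. Hence it maps `E ∩ V` into the slice `E ∩ (x₀ + V)`, and a
homothety of ratio `1/2` scales the `d`-dimensional Hausdorff measure by `2⁻ᵈ`.
-/

open AffineMap Set

theorem Convex.image_homothety_subset {𝕜 E : Type*} [Field 𝕜] [LinearOrder 𝕜]
    [IsStrictOrderedRing 𝕜] [AddCommGroup E] [Module 𝕜 E] {s : Set E} (hs : Convex 𝕜 s)
    {c : E} (hc : c ∈ s) {t : 𝕜} (ht : t ∈ Icc 0 1) : homothety c t '' s ⊆ s := by
  rintro _ ⟨x, hx, rfl⟩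
  rw [homothety_eq_lineMap]
  exact hs.lineMap_mem hc hx ht

theorem Submodule.image_homothety_subset_image_add_starProjection {𝕜 E : Type*} [RCLike 𝕜]
    [NormedAddCommGroup E] [InnerProductSpace 𝕜 E] (V : Submodule 𝕜 E)
    [V.HasOrthogonalProjection] (c : E) (t : 𝕜) :
    homothety c t '' V ⊆ (Vᗮ.starProjection ((1 - t) • c) + ·) '' V := by
  rintro _ ⟨x, hx, rfl⟩
  refine ⟨V.starProjection ((1 - t) • c) + t • x,
    V.add_mem (V.starProjection_apply_mem _) (V.smul_mem t hx), ?_⟩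
  simp only [starProjection_orthogonal_val, homothety_apply, vsub_eq_sub, vadd_eq_add]
  module

theorem stmt3_general (n d : ℕ)
    (E : Set (EuclideanSpace ℝ (Fin n)))
    (hconv : Convex ℝ E)
    (V : Submodule ℝ (EuclideanSpace ℝ (Fin n)))
    (x₀ : EuclideanSpace ℝ (Fin n))
    (hx₀ : x₀ ∈ (Vᗮ.subtypeL.comp (Submodule.orthogonalProjection Vᗮ)) '' ((2 : ℝ)⁻¹ • E)) :
    (2 : ℝ≥0∞)⁻¹ ^ d * μH[(d : ℝ)] (E ∩ (V : Set (EuclideanSpace ℝ (Fin n)))) ≤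
      μH[(d : ℝ)] (E ∩ ((x₀ + ·) '' (V : Set (EuclideanSpace ℝ (Fin n))))) := by
  obtain ⟨_, ⟨x₁, hx₁, rfl⟩, rfl⟩ := hx₀
  have hslice : homothety x₁ (2⁻¹ : ℝ) '' (E ∩ V) ⊆
      E ∩ (Vᗮ.starProjection ((2 : ℝ)⁻¹ • x₁) + ·) '' V := by
    refine (image_inter_subset _ _ _).trans (inter_subset_inter
      (hconv.image_homothety_subset hx₁ ⟨by norm_num, by norm_num⟩) ?_)
    simpa [show (1 : ℝ) - 2⁻¹ = 2⁻¹ by norm_num] using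
      V.image_homothety_subset_image_add_starProjection x₁ (2⁻¹ : ℝ)
  calc (2 : ℝ≥0∞)⁻¹ ^ d * μH[(d : ℝ)] (E ∩ V)
      = μH[(d : ℝ)] (homothety x₁ (2⁻¹ : ℝ) '' (E ∩ V)) := by
        rw [hausdorffMeasure_homothety_image d.cast_nonneg x₁ (by norm_num)]
        simp [ENNReal.smul_def, nnnorm_inv, ENNReal.inv_pow]
    _ ≤ _ := measure_mono hslice

/-- Let `E ⊂ ℝⁿ` be a convex body symmetric about `0`, `V` a subspace of dimension `d`, and
`x₀` a point in the image of `(1/2) • E` under the orthogonal projection `Q` onto `Vᗮ`.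
Then the slice `E ∩ (x₀ + V)` has `d`-dimensional measure at least `2⁻ᵈ * m_d(E ∩ V)`. -/
theorem stmt3 (n d : ℕ)
    (E : Set (EuclideanSpace ℝ (Fin n)))
    (hconv : Convex ℝ E) (hbdd : Bornology.IsBounded E) (hne : (interior E).Nonempty)
    (hsymm : E = -E)
    (V : Submodule ℝ (EuclideanSpace ℝ (Fin n))) (hV : Module.finrank ℝ V = d)
    (x₀ : EuclideanSpace ℝ (Fin n))
    (hx₀ : x₀ ∈ (Vᗮ.subtypeL.comp (Submodule.orthogonalProjection Vᗮ)) '' ((2 : ℝ)⁻¹ • E)) :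
    (2 : ℝ≥0∞)⁻¹ ^ d * μH[(d : ℝ)] (E ∩ (V : Set (EuclideanSpace ℝ (Fin n)))) ≤
      μH[(d : ℝ)] (E ∩ ((x₀ + ·) '' (V : Set (EuclideanSpace ℝ (Fin n))))) :=
  stmt3_general n d E hconv V x₀ hx₀
end

section
/- Let Γ ⊂ ℝⁿ be a full rank lattice and W ⊂ ℝⁿ measurable such that ∑_{γ∈Γ} 1_W(x+γ) ≤ 1 for a.e. x (W packs by Γ-translations). Let V be a d-dimensional subspace such that Γ ∩ V is a lattice of rank d, and let F₀ be a fundamental domain of (Γ∩V) in V. Then for m_{n−d}-almost every y ∈ V⊥, m_d(W ∩ (y + V)) ≤ m_d(F₀). -/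
open MeasureTheory Module Set Function

/-!
On a slice `y + V` along which the packing condition holds almost everywhere, the translates of
`W ∩ (y + V)` by `Γ ∩ V` are a.e. disjoint, while the translates of `y + F₀` cover `y + V`;
translation invariance of `μH[d]` then gives `μH[d] (W ∩ (y + V)) ≤ μH[d] F₀`. The packing
condition fails only on a Lebesgue-null set, and by Fubini along `ℝⁿ ≃ Vᗮ × V`, where Hausdorff
measure of full dimension is a Haar measure on each factor, almost every slice of a null set is
null.
-/

section Packing

variable {G : Type*} [MeasurableSpace G] [AddGroup G] [MeasurableAdd G]

theorem measure_le_of_packing_of_covering (μ : Measure G) [μ.IsAddRightInvariant]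
    {S F Λ : Set G} (hΛ : Λ.Countable) (hS : MeasurableSet S)
    (hcover : ∀ x ∈ S, ∃ g ∈ Λ, x - g ∈ F)
    (hpack : ∀ᵐ x ∂μ, {g ∈ Λ | x + g ∈ S}.Subsingleton) : μ S ≤ μ F := by
  have := hΛ.to_subtype
  have hS_sub : S ⊆ ⋃ g : Λ, (· + -(g : G)) ⁻¹' ((· + (g : G)) ⁻¹' S ∩ F) := by
    intro x hx
    obtain ⟨g, hg, hxg⟩ := hcover x hx
    exact mem_iUnion.2 ⟨⟨g, hg⟩, by simp [← sub_eq_add_neg, hx, hxg]⟩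
  have hdisj : Pairwise (AEDisjoint (μ.restrict F) on fun g : Λ ↦ (· + (g : G)) ⁻¹' S) := by
    intro g₁ g₂ hne
    have hpackF : ∀ᵐ x ∂μ.restrict F, {g ∈ Λ | x + g ∈ S}.Subsingleton :=
      ae_restrict_of_ae hpack
    refine measure_mono_null (fun x hx ↦ ?_) (ae_iff.1 hpackF)
    intro hsub
    exact hne (Subtype.ext (hsub ⟨g₁.2, hx.1⟩ ⟨g₂.2, hx.2⟩))
  have hmeas (g : Λ) : MeasurableSet ((· + (g : G)) ⁻¹' S) :=
    hS.preimage (measurable_add_const _)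
  calc μ S ≤ ∑' g : Λ, μ ((· + -(g : G)) ⁻¹' ((· + (g : G)) ⁻¹' S ∩ F)) :=
        (measure_mono hS_sub).trans (measure_iUnion_le _)
    _ = ∑' g : Λ, μ.restrict F ((· + (g : G)) ⁻¹' S) := by
        simp_rw [measure_preimage_add_right, Measure.restrict_apply (hmeas _)]
    _ = μ.restrict F (⋃ g : Λ, (· + (g : G)) ⁻¹' S) :=
        (measure_iUnion₀ hdisj fun g ↦ (hmeas g).nullMeasurableSet).symm
    _ ≤ μ F := (measure_mono (subset_univ _)).trans_eq (Measure.restrict_apply_univ F)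

end Packing

section Slices

variable {E : Type*} [NormedAddCommGroup E] [NormedSpace ℝ E] [FiniteDimensional ℝ E]
  [MeasurableSpace E] [BorelSpace E]

theorem ae_hausdorffMeasure_inter_translate_eq_zero (μ : Measure E) [μ.IsAddHaarMeasure]
    {U V : Submodule ℝ E} (hUV : IsCompl U V) {N : Set E} (hN : μ N = 0) :
    ∀ᵐ y ∂(μH[finrank ℝ U] : Measure E).restrict U,
      μH[finrank ℝ V] (N ∩ (y + ·) '' V) = 0 := by
  let e : (U × V) ≃L[ℝ] E := (Submodule.prodEquivOfIsCompl U V hUV).toContinuousLinearEquiv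
  let ν : Measure (U × V) := (μH[finrank ℝ U] : Measure U).prod μH[finrank ℝ V]
  have hprod : ν (e ⁻¹' N) = 0 := by
    have := e.isAddHaarMeasure_map ν
    refine nonpos_iff_eq_zero.1 ((Measure.le_map_apply e.continuous.aemeasurable N).trans_eq ?_)
    exact Measure.absolutelyContinuous_isAddHaarMeasure _ μ hN
  have hslice : ∀ᵐ u : U ∂μH[finrank ℝ U], μH[finrank ℝ V] (N ∩ ((u : E) + ·) '' V) = 0 := by
    filter_upwards [Measure.measure_ae_null_of_prod_null hprod] with u hu
    let f : V → E := ((u : E) + ·) ∘ (↑)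
    have hf : Isometry f := (IsometryEquiv.addLeft (u : E)).isometry.comp V.subtypeₗᵢ.isometry
    rw [← Subtype.range_coe (s := (V : Set E)), ← range_comp, ← image_preimage_eq_inter_range]
    exact (hf.hausdorffMeasure_image (Or.inl (Nat.cast_nonneg _)) _).trans hu
  have hmap : Measure.map ((↑) : U → E) μH[finrank ℝ U] =
      (μH[finrank ℝ U] : Measure E).restrict U := by
    simpa using U.subtypeₗᵢ.isometry.map_hausdorffMeasure (Or.inl (Nat.cast_nonneg _))
  rw [← hmap]
  exact (MeasurableEmbedding.subtype_coe U.closed_of_finiteDimensional.measurableSet).ae_map_iff.2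
    hslice

theorem hausdorffMeasure_inter_translate_le_of_packing {d : ℝ} {V : Submodule ℝ E}
    {Γ W F₀ : Set E} (hΓ : Γ.Countable) (hW : MeasurableSet W)
    (hcover : ∀ v ∈ V, ∃ γ ∈ Γ ∩ V, v - γ ∈ F₀) {y : E}
    (hy : μH[d] ({x | ¬{γ ∈ Γ | x + γ ∈ W}.Subsingleton} ∩ (y + ·) '' V) = 0) :
    μH[d] (W ∩ (y + ·) '' V) ≤ μH[d] F₀ := by
  calc μH[d] (W ∩ (y + ·) '' V) ≤ μH[d] ((y + ·) '' F₀) := by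
        refine measure_le_of_packing_of_covering _ (Λ := Γ ∩ V) (hΓ.mono inter_subset_left)
          ?_ ?_ ?_
        · rw [image_add_left]
          exact hW.inter (V.closed_of_finiteDimensional.measurableSet.preimage
            (measurable_const_add _))
        · rintro x ⟨-, v, hv, rfl⟩
          obtain ⟨γ, hγ, hvγ⟩ := hcover v hv
          exact ⟨γ, hγ, v - γ, hvγ, (add_sub_assoc y v γ).symm⟩
        · rw [ae_iff]
          refine measure_mono_null (fun x hx ↦ ?_) hy
          obtain ⟨γ, ⟨-, hγV⟩, -, v, hv, hxγ⟩ := (not_subsingleton_iff.1 hx).nonempty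
          refine ⟨fun hsub ↦ hx (hsub.anti fun g hg ↦ ⟨hg.1.1, hg.2.1⟩),
            v - γ, V.sub_mem hv hγV, ?_⟩
          simp only [← add_sub_assoc, hxγ, add_sub_cancel_right]
    _ = μH[d] F₀ := by rw [image_add_left, measure_preimage_add]

end Slices

theorem stmt4_general (n d : ℕ)
    (L : EuclideanSpace ℝ (Fin n) ≃ₗ[ℝ] EuclideanSpace ℝ (Fin n))
    (Γ : Set (EuclideanSpace ℝ (Fin n)))
    (hΓ : Γ = Set.range fun k : Fin n → ℤ => L (WithLp.toLp 2 (fun i => (k i : ℝ))))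
    (W : Set (EuclideanSpace ℝ (Fin n))) (hW : MeasurableSet W)
    (hpack : ∀ᵐ x : EuclideanSpace ℝ (Fin n), {γ ∈ Γ | x + γ ∈ W}.Subsingleton)
    (V : Submodule ℝ (EuclideanSpace ℝ (Fin n))) (hV : Module.finrank ℝ V = d)
    (F₀ : Set (EuclideanSpace ℝ (Fin n)))
    (hF₀ : ∀ v ∈ (V : Set (EuclideanSpace ℝ (Fin n))),
      ∃! γ, γ ∈ Γ ∩ (V : Set (EuclideanSpace ℝ (Fin n))) ∧ v - γ ∈ F₀) :
    ∀ᵐ y ∂(μH[((n - d : ℕ) : ℝ)]).restrict (Vᗮ : Set (EuclideanSpace ℝ (Fin n))),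
      μH[(d : ℝ)] (W ∩ ((y + ·) '' (V : Set (EuclideanSpace ℝ (Fin n))))) ≤ μH[(d : ℝ)] F₀ := by
  have hfinrank_orth : finrank ℝ Vᗮ = n - d := by
    have := V.finrank_add_finrank_orthogonal
    rw [hV, finrank_euclideanSpace_fin] at this
    omega
  have hslices := ae_hausdorffMeasure_inter_translate_eq_zero volume
    V.isCompl_orthogonal.symm (ae_iff.1 hpack)
  rw [hfinrank_orth, hV] at hslices
  filter_upwards [hslices] with y hy
  exact hausdorffMeasure_inter_translate_le_of_packing (hΓ ▸ countable_range _) hW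
    (fun v hv ↦ by simpa only [exists_prop, and_assoc] using (hF₀ v hv).exists) hy

/-- Let `Γ ⊂ ℝⁿ` be a full rank lattice and `W` measurable packing by `Γ`-translations
(for a.e. `x` at most one `γ ∈ Γ` satisfies `x + γ ∈ W`). Let `V` be a `d`-dimensional
subspace such that `Γ ∩ V` is a lattice of rank `d`, and let `F₀ ⊆ V` be a fundamental
domain of `Γ ∩ V` in `V`. Then for `m_{n−d}`-a.e. `y ∈ Vᗮ`,
`m_d(W ∩ (y + V)) ≤ m_d(F₀)`. -/
theorem stmt4 (n d : ℕ)
    (L : EuclideanSpace ℝ (Fin n) ≃ₗ[ℝ] EuclideanSpace ℝ (Fin n))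
    (Γ : Set (EuclideanSpace ℝ (Fin n)))
    (hΓ : Γ = Set.range fun k : Fin n → ℤ => L (WithLp.toLp 2 (fun i => (k i : ℝ))))
    (W : Set (EuclideanSpace ℝ (Fin n))) (hW : MeasurableSet W)
    (hpack : ∀ᵐ x : EuclideanSpace ℝ (Fin n), {γ ∈ Γ | x + γ ∈ W}.Subsingleton)
    (V : Submodule ℝ (EuclideanSpace ℝ (Fin n))) (hV : Module.finrank ℝ V = d)
    (hrank : ∃ b : Fin d → EuclideanSpace ℝ (Fin n),
      (∀ i, b i ∈ Γ ∩ (V : Set (EuclideanSpace ℝ (Fin n)))) ∧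
        Submodule.span ℝ (Set.range b) = V)
    (F₀ : Set (EuclideanSpace ℝ (Fin n)))
    (hF₀V : F₀ ⊆ (V : Set (EuclideanSpace ℝ (Fin n))))
    (hF₀ : ∀ v ∈ (V : Set (EuclideanSpace ℝ (Fin n))),
      ∃! γ, γ ∈ Γ ∩ (V : Set (EuclideanSpace ℝ (Fin n))) ∧ v - γ ∈ F₀) :
    ∀ᵐ y ∂(μH[((n - d : ℕ) : ℝ)]).restrict (Vᗮ : Set (EuclideanSpace ℝ (Fin n))),
      μH[(d : ℝ)] (W ∩ ((y + ·) '' (V : Set (EuclideanSpace ℝ (Fin n))))) ≤ μH[(d : ℝ)] F₀ :=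
  stmt4_general n d L Γ hΓ W hW hpack V hV F₀ hF₀
end

section
/- Let A be an invertible n×n matrix and Γ a full rank lattice. The following are equivalent: (a) ∑_{j=1}^∞ 1/#(A^{−j}(B(0,r)) ∩ Γ) = ∞ for every r > 0; (b) ∑_{j=1}^∞ 1/#(A^{−j}(B(0,r)) ∩ Γ) = ∞ for some r > 0. -/
/-!
Cover the ball of radius `r` by finitely many, say `N`, balls of radius `ρ / 2`. For an additive
map `T` and a subgroup `Γ`, translating by one point of `T(B(x, ρ/2)) ∩ Γ` embeds that set into
`T(B(0, ρ)) ∩ Γ`, since `B(x, ρ/2) - B(x, ρ/2) = B(0, ρ)`. Hence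
`#(T(B(0, r)) ∩ Γ) ≤ N · #(T(B(0, ρ)) ∩ Γ)` uniformly in `T = A⁻ʲ`, and divergence of the series
for `ρ` forces divergence for `r`.
-/

open Set Metric
open scoped ENNReal Pointwise

lemma AddSubgroup.encard_inter_le_of_sub_subset {G : Type*} [AddGroup G] (Γ : AddSubgroup G)
    {S S' : Set G} (h : S - S ⊆ S') : (S ∩ Γ).encard ≤ (S' ∩ Γ).encard := by
  rcases (S ∩ Γ).eq_empty_or_nonempty with hS | ⟨γ, hγS, hγΓ⟩
  · simp [hS]
  refine encard_le_encard_of_injOn (f := (· - γ)) ?_ fun a _ b _ hab => sub_left_injective hab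
  rintro x ⟨hxS, hxΓ⟩
  exact ⟨h (sub_mem_sub hxS hγS), Γ.sub_mem hxΓ hγΓ⟩

section Covering

variable {E F : Type*} [SeminormedAddCommGroup E] [NormedSpace ℝ E] [AddGroup F]

lemma encard_image_ball_half_inter_le (T : E →+ F) (Γ : AddSubgroup F) {ρ : ℝ} (hρ : 0 < ρ)
    (x : E) : (T '' ball x (ρ / 2) ∩ Γ).encard ≤ (T '' ball 0 ρ ∩ Γ).encard := by
  refine Γ.encard_inter_le_of_sub_subset ?_
  rw [← image_sub, ball_sub_ball (half_pos hρ) (half_pos hρ), sub_self, add_halves]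

lemma exists_encard_image_ball_inter_le_mul [ProperSpace E] (r : ℝ) {ρ : ℝ} (hρ : 0 < ρ) :
    ∃ N : ℕ, ∀ (T : E →+ F) (Γ : AddSubgroup F),
      (T '' ball 0 r ∩ Γ).encard ≤ N * (T '' ball 0 ρ ∩ Γ).encard := by
  obtain ⟨t, -, hcover⟩ := (isCompact_closedBall (0 : E) r).elim_nhds_subcover
    (fun x => ball x (ρ / 2)) fun x _ => ball_mem_nhds x (half_pos hρ)
  refine ⟨t.card, fun T Γ => ?_⟩
  calc (T '' ball 0 r ∩ Γ).encard
      ≤ (⋃ x ∈ t, T '' ball x (ρ / 2) ∩ Γ).encard := by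
        refine encard_le_encard ?_
        rintro _ ⟨⟨y, hy, rfl⟩, hyΓ⟩
        obtain ⟨x, hx, hyx⟩ := mem_iUnion₂.1 (hcover (ball_subset_closedBall hy))
        exact mem_iUnion₂.2 ⟨x, hx, mem_image_of_mem T hyx, hyΓ⟩
    _ ≤ ∑ x ∈ t, (T '' ball x (ρ / 2) ∩ Γ).encard := t.set_encard_biUnion_le _
    _ ≤ ∑ _x ∈ t, (T '' ball 0 ρ ∩ Γ).encard :=
        Finset.sum_le_sum fun x _ => encard_image_ball_half_inter_le T Γ hρ x
    _ = t.card * (T '' ball 0 ρ ∩ Γ).encard := by rw [Finset.sum_const, nsmul_eq_mul]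

end Covering

lemma ENNReal.tsum_one_div_eq_top_of_le_mul {ι : Type*} {a b : ι → ℝ≥0∞} {C : ℝ≥0∞}
    (hC : C ≠ ∞) (hab : ∀ i, a i ≤ C * b i) (hb : ∑' i, 1 / b i = ∞) : ∑' i, 1 / a i = ∞ := by
  -- `C + 1` instead of `C`, so that `(C + 1)⁻¹` is finite and `ENNReal.mul_inv` applies.
  have hC' : C + 1 ≠ ∞ := ENNReal.add_ne_top.2 ⟨hC, ENNReal.one_ne_top⟩
  have key : ∀ i, (C + 1)⁻¹ * (1 / b i) ≤ 1 / a i := fun i => by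
    rw [one_div, one_div, ← ENNReal.mul_inv (Or.inl (by simp)) (Or.inl hC')]
    exact ENNReal.inv_le_inv.2 ((hab i).trans (by gcongr; exact le_self_add))
  refine top_le_iff.1 ?_
  calc ∞ = (C + 1)⁻¹ * ∑' i, 1 / b i := by rw [hb, ENNReal.mul_top (ENNReal.inv_ne_zero.2 hC')]
    _ = ∑' i, (C + 1)⁻¹ * (1 / b i) := ENNReal.tsum_mul_left.symm
    _ ≤ ∑' i, 1 / a i := ENNReal.tsum_le_tsum key

lemma exists_addSubgroup_coe_eq_range_intVector {n : ℕ} {E : Type*} [AddCommGroup E]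
    [Module ℝ E] (L : EuclideanSpace ℝ (Fin n) →ₗ[ℝ] E) :
    ∃ Λ : AddSubgroup E,
      (Λ : Set E) = range fun k : Fin n → ℤ => L (WithLp.toLp 2 fun i => (k i : ℝ)) := by
  let f : (Fin n → ℤ) →+ E :=
    AddMonoidHom.mk' (fun k => L (WithLp.toLp 2 fun i => (k i : ℝ))) fun k k' => by
      rw [← map_add, ← WithLp.toLp_add]
      simp only [Pi.add_apply, Int.cast_add]
      rfl
  exact ⟨f.range, f.coe_range⟩

/-- The divergence of `∑_j 1/#(A^{-j}(B(0,r)) ∩ Γ)` does not depend on the radius `r`: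
it diverges for every `r > 0` if and only if it diverges for some `r > 0`. -/
theorem stmt8 (n : ℕ)
    (A : EuclideanSpace ℝ (Fin n) ≃ₗ[ℝ] EuclideanSpace ℝ (Fin n))
    (L : EuclideanSpace ℝ (Fin n) ≃ₗ[ℝ] EuclideanSpace ℝ (Fin n))
    (Γ : Set (EuclideanSpace ℝ (Fin n)))
    (hΓ : Γ = Set.range fun k : Fin n → ℤ => L (WithLp.toLp 2 (fun i => (k i : ℝ)))) :
    (∀ r : ℝ, 0 < r →
      ∑' j : ℕ, (1 : ℝ≥0∞) /
        (((A ^ (-(j + 1 : ℕ) : ℤ)) '' Metric.ball 0 r ∩ Γ).encard : ℝ≥0∞) = ∞) ↔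
    (∃ r : ℝ, 0 < r ∧
      ∑' j : ℕ, (1 : ℝ≥0∞) /
        (((A ^ (-(j + 1 : ℕ) : ℤ)) '' Metric.ball 0 r ∩ Γ).encard : ℝ≥0∞) = ∞) := by
  obtain ⟨Λ, hΛ⟩ := exists_addSubgroup_coe_eq_range_intVector L.toLinearMap
  obtain rfl : Γ = Λ := hΓ.trans hΛ.symm
  refine ⟨fun h => ⟨1, one_pos, h 1 one_pos⟩, ?_⟩
  rintro ⟨ρ, hρ, hsum⟩ r -
  obtain ⟨N, hN⟩ := exists_encard_image_ball_inter_le_mul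
    (E := EuclideanSpace ℝ (Fin n)) (F := EuclideanSpace ℝ (Fin n)) r hρ
  refine ENNReal.tsum_one_div_eq_top_of_le_mul (ENNReal.natCast_ne_top N) (fun j => ?_) hsum
  exact_mod_cast hN (A ^ (-(j + 1 : ℕ) : ℤ)).toLinearMap.toAddMonoidHom Λ
end

section
/- Let A be an invertible n×n matrix, Γ a full rank lattice, and W ⊂ ℝⁿ a measurable set that packs by Γ-translations (∑_{γ∈Γ} 1_W(x+γ) ≤ 1 a.e.). Then there exists a constant C depending only on n such that for all x ∈ ℝⁿ, the Lebesgue measure |B(x,1) ∩ A(W)| ≤ C / #(A^{−1}(B(0,1)) ∩ Γ). -/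
/-! The `A`-images of the lattice points in `A⁻¹(B(0,1))` have norm `< 1`, so they translate
`S = B(x,1) ∩ A(W)` into `B(x,2)`, and since `W` packs by `Γ` these translates are almost
disjoint. Hence `#(A⁻¹(B(0,1)) ∩ Γ) · |S| ≤ |B(0,2)|`, and `C = |B(0,2)|` works. -/

open Function MeasureTheory Metric Set
open scoped ENNReal Pointwise

section Packing

variable {G : Type*} [MeasurableSpace G]

theorem Set.Pairwise.aedisjoint_vadd_of_ae_subsingleton [AddCommGroup G] {μ : Measure G}
    {Γ W : Set G} (hneg : ∀ γ ∈ Γ, -γ ∈ Γ)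
    (hpack : ∀ᵐ x ∂μ, {γ ∈ Γ | x + γ ∈ W}.Subsingleton) :
    Γ.Pairwise (AEDisjoint μ on (· +ᵥ W)) := by
  intro γ₁ h₁ γ₂ h₂ hne
  refine measure_mono_null ?_ (ae_iff.1 hpack)
  rintro z ⟨hz₁, hz₂⟩ hsub
  simp only [mem_vadd_set_iff_neg_vadd_mem, vadd_eq_add, add_comm _ z] at hz₁ hz₂
  exact hne <| neg_injective (hsub ⟨hneg _ h₁, hz₁⟩ ⟨hneg _ h₂, hz₂⟩)

theorem encard_mul_measure_le_of_pairwise_aedisjoint_vadd [AddGroup G] [MeasurableAdd G]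
    {μ : Measure G} [μ.IsAddLeftInvariant] {T S U : Set G} (hT : T.Countable)
    (hS : MeasurableSet S) (hdisj : T.Pairwise (AEDisjoint μ on (· +ᵥ S)))
    (hU : ∀ t ∈ T, t +ᵥ S ⊆ U) :
    T.encard * μ S ≤ μ U :=
  calc (T.encard : ℝ≥0∞) * μ S = ∑' t : T, μ ((t : G) +ᵥ S) := by
        simp only [measure_vadd, ENNReal.tsum_const, Set.encard]
    _ = μ (⋃ t ∈ T, t +ᵥ S) :=
        (measure_biUnion₀ hT hdisj fun t _ => (hS.const_vadd t).nullMeasurableSet).symm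
    _ ≤ μ U := measure_mono (iUnion₂_subset hU)

end Packing

theorem MeasureTheory.AEDisjoint.image_linearEquiv {E : Type*} [NormedAddCommGroup E]
    [NormedSpace ℝ E] [MeasurableSpace E] [BorelSpace E] [FiniteDimensional ℝ E]
    {μ : Measure E} [μ.IsAddHaarMeasure] (A : E ≃ₗ[ℝ] E) {s t : Set E}
    (h : AEDisjoint μ s t) : AEDisjoint μ (A '' s) (A '' t) := by
  rw [AEDisjoint, ← image_inter A.injective]
  have := μ.addHaar_image_linearMap A.toLinearMap (s ∩ t)
  simp only [LinearEquiv.coe_coe] at this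
  rw [this, h, mul_zero]

theorem vadd_ball_subset_ball {E : Type*} [SeminormedAddCommGroup E] {t x : E} {r s : ℝ}
    (ht : t ∈ ball 0 r) : t +ᵥ ball x s ⊆ ball x (s + r) := by
  rw [vadd_ball]
  refine ball_subset_ball' ?_
  rw [vadd_eq_add, dist_add_self_left]
  linarith [mem_ball_zero_iff.1 ht]

theorem neg_mem_range_linearEquiv_intCast {n : ℕ}
    (L : EuclideanSpace ℝ (Fin n) ≃ₗ[ℝ] EuclideanSpace ℝ (Fin n)) {γ : EuclideanSpace ℝ (Fin n)}
    (hγ : γ ∈ range fun k : Fin n → ℤ => L (WithLp.toLp 2 fun i => (k i : ℝ))) :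
    -γ ∈ range fun k : Fin n → ℤ => L (WithLp.toLp 2 fun i => (k i : ℝ)) := by
  obtain ⟨k, rfl⟩ := hγ
  exact ⟨-k, by simp [← map_neg, ← WithLp.toLp_neg]; rfl⟩

/-- If `W` packs by `Γ`-translations, then there is a constant `C` depending only on the
dimension `n` such that for all `x`, `|B(x,1) ∩ A(W)| ≤ C / #(A⁻¹(B(0,1)) ∩ Γ)`. -/
theorem stmt9 (n : ℕ) :
    ∃ C : ℝ≥0∞, 0 < C ∧ C < ∞ ∧
      ∀ (A L : EuclideanSpace ℝ (Fin n) ≃ₗ[ℝ] EuclideanSpace ℝ (Fin n))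
        (Γ : Set (EuclideanSpace ℝ (Fin n))),
        Γ = (Set.range fun k : Fin n → ℤ => L (WithLp.toLp 2 (fun i => (k i : ℝ)))) →
        ∀ W : Set (EuclideanSpace ℝ (Fin n)), MeasurableSet W →
        (∀ᵐ x : EuclideanSpace ℝ (Fin n), {γ ∈ Γ | x + γ ∈ W}.Subsingleton) →
        ∀ x : EuclideanSpace ℝ (Fin n),
          volume (Metric.ball x 1 ∩ A '' W) ≤
            C / ((A.symm '' Metric.ball 0 1 ∩ Γ).encard : ℝ≥0∞) := by
  set C := volume (ball (0 : EuclideanSpace ℝ (Fin n)) 2)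
  have hC : 0 < C := measure_ball_pos _ _ two_pos
  have hC' : C < ∞ := measure_ball_lt_top
  refine ⟨C, hC, hC', ?_⟩
  rintro A L _ rfl W hW hpack x
  set S := ball x 1 ∩ A '' W
  have hS : MeasurableSet S := measurableSet_ball.inter <|
    A.toContinuousLinearEquiv.toHomeomorph.toMeasurableEquiv.measurableSet_image.2 hW
  have hSW (γ) : A γ +ᵥ S ⊆ A '' (γ +ᵥ W) := by
    rw [image_vadd_distrib]
    exact vadd_set_mono inter_subset_right
  set T := A '' (A.symm '' ball 0 1 ∩ range _)
  have hdisj : T.Pairwise (AEDisjoint volume on (· +ᵥ S)) :=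
    A.injective.injOn.pairwise_image.2 <|
      ((Set.Pairwise.aedisjoint_vadd_of_ae_subsingleton
        (fun _ => neg_mem_range_linearEquiv_intCast L) hpack).mono inter_subset_right).imp
        fun γ₁ γ₂ h => (h.image_linearEquiv A).mono (hSW γ₁) (hSW γ₂)
  have hball : ∀ t ∈ T, t +ᵥ S ⊆ ball x 2 := by
    rintro _ ⟨γ, ⟨⟨y, hy, rfl⟩, -⟩, rfl⟩
    refine (vadd_set_mono inter_subset_left).trans ?_
    simpa [one_add_one_eq_two] using vadd_ball_subset_ball (x := x) (s := 1) hy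
  have key := encard_mul_measure_le_of_pairwise_aedisjoint_vadd
    (((countable_range _).mono inter_subset_right).image A) hS hdisj hball
  rw [A.injective.encard_image, Measure.addHaar_ball_center] at key
  rwa [ENNReal.le_div_iff_mul_le (.inr hC.ne') (.inr hC'.ne), mul_comm]
end

section
/- Let A be an invertible n×n matrix with |det A| > 1, Γ a full rank lattice, and W ⊂ ℝⁿ measurable. Suppose there exist ε > 0, a set U that tiles ℝⁿ by A-dilations, and infinitely many pairwise disjoint measurable subsets V_k ⊂ U each of measure at least ε, such that a_J := sup_k ∑_{j≥J} |V_k ∩ A^j(W)| → 0 as J → ∞. Then W does not simultaneously tile ℝⁿ by A-dilations and by Γ-translations (W is not an (A,Γ) wavelet set). -/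
/-!
A set tiling by the lattice `Γ` has the measure of a fundamental parallelepiped, so `|W| < ∞`.
Since `|det A| > 1`, the measures of `A^j(W)` decay geometrically as `j → -∞`, hence
`S = ⋃_{j < J} A^j(W)` has finite measure for every `J`. As the dilates of `W` cover `ℝⁿ`, every
`V k` is covered by `S` and by the `A^j(W)` with `j ≥ J`, so `|V k ∩ S| ≥ ε - a_J`; choosing `J`
with `a_J < ε` this bound is positive, which is impossible for infinitely many disjoint subsets of
the finite-measure set `S`.
-/

open MeasureTheory Set Filter Topology Module
open scoped ENNReal

theorem MeasureTheory.IsAddFundamentalDomain.of_ae_existsUnique {G α : Type*} [AddGroup G]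
    [AddAction G α] [MeasurableSpace α] {s : Set α} {μ : Measure α}
    (h_meas : NullMeasurableSet s μ) (h : ∀ᵐ x ∂μ, ∃! g : G, g +ᵥ x ∈ s) :
    IsAddFundamentalDomain G s μ where
  nullMeasurableSet := h_meas
  ae_covers := h.mono fun _ hx => hx.exists
  aedisjoint a b hab := by
    refine measure_mono_null ?_ (ae_iff.1 h)
    rintro x ⟨hxa, hxb⟩ hx
    rw [mem_vadd_set_iff_neg_vadd_mem] at hxa hxb
    exact hab (neg_injective (hx.unique hxa hxb))

theorem Module.Basis.coe_span_int_eq_range {ι E : Type*} [Fintype ι] [AddCommGroup E]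
    [Module ℝ E] (b : Basis ι ℝ E) :
    (Submodule.span ℤ (range b) : Set E) = range fun k : ι → ℤ => b.equivFun.symm (k ·) := by
  ext x
  rw [SetLike.mem_coe, b.mem_span_iff_repr_mem ℤ]
  constructor
  · intro h
    choose k hk using h
    exact ⟨k, b.equivFun.symm_apply_eq.2 (funext fun i => by simpa using hk i)⟩
  · rintro ⟨k, rfl⟩ i
    exact ⟨k i, by rw [← b.equivFun_apply, b.equivFun.apply_symm_apply]; rfl⟩

theorem ZSpan.measure_lt_top_of_ae_existsUnique_add_mem {ι E : Type*} [Finite ι]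
    [NormedAddCommGroup E] [NormedSpace ℝ E] [FiniteDimensional ℝ E] [MeasurableSpace E]
    [BorelSpace E] (b : Basis ι ℝ E) (μ : Measure E) [μ.IsAddHaarMeasure] {s : Set E}
    (hs : NullMeasurableSet s μ)
    (h : ∀ᵐ x ∂μ, ∃! γ, γ ∈ Submodule.span ℤ (range b) ∧ x + γ ∈ s) : μ s < ⊤ := by
  let Λ := (Submodule.span ℤ (range b)).toAddSubgroup
  have : Countable Λ := inferInstanceAs (Countable (Submodule.span ℤ (range b)))
  have : VAddInvariantMeasure Λ E μ := ⟨fun c s _ => measure_preimage_add _ _ _⟩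
  have hs_fd : IsAddFundamentalDomain Λ s μ := by
    refine .of_ae_existsUnique hs (h.mono fun x ⟨γ, ⟨hγ, hγs⟩, huniq⟩ => ?_)
    refine ⟨⟨γ, hγ⟩, ?_, fun g hg => Subtype.ext (huniq g ⟨g.2, ?_⟩)⟩
    · show γ + x ∈ s
      rwa [add_comm]
    · rw [add_comm]
      exact hg
  rw [hs_fd.measure_eq (ZSpan.isAddFundamentalDomain' b μ)]
  exact (ZSpan.fundamentalDomain_isBounded b).measure_lt_top

theorem EuclideanSpace.range_intCast_map_eq_span {ι : Type*} [Fintype ι]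
    (L : EuclideanSpace ℝ ι ≃ₗ[ℝ] EuclideanSpace ℝ ι) :
    (range fun k : ι → ℤ => L (WithLp.toLp 2 fun i => (k i : ℝ))) =
      Submodule.span ℤ (range ((EuclideanSpace.basisFun ι ℝ).toBasis.map L)) := by
  rw [Basis.coe_span_int_eq_range]
  rfl

theorem Set.iUnion_int_eq_iUnion_sub_union_iUnion_add {α : Type*} (f : ℤ → Set α) (J : ℤ) :
    ⋃ j, f j = (⋃ m : ℕ, f (J - 1 - m)) ∪ ⋃ i : ℕ, f (J + i) := by
  refine Subset.antisymm (iUnion_subset fun j => ?_) ?_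
  · rcases le_or_gt J j with hJj | hjJ
    · obtain ⟨i, rfl⟩ := Int.le.dest hJj
      exact subset_union_of_subset_right (subset_iUnion (fun i : ℕ => f (J + i)) i) _
    · obtain ⟨m, hm⟩ := Int.le.dest (Int.le_sub_one_of_lt hjJ)
      rw [show j = J - 1 - m by omega]
      exact subset_union_of_subset_left (subset_iUnion (fun m : ℕ => f (J - 1 - m)) m) _
  · exact union_subset (iUnion_subset fun _ => subset_iUnion f _)
      (iUnion_subset fun _ => subset_iUnion f _)

theorem MeasureTheory.measure_le_measure_inter_add_tsum_of_ae_mem {α : Type*}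
    [MeasurableSpace α] {μ : Measure α} {s : Set α} {t : ℕ → Set α}
    (h : ∀ᵐ x ∂μ, x ∈ s ∪ ⋃ i, t i) (v : Set α) :
    μ v ≤ μ (v ∩ s) + ∑' i, μ (v ∩ t i) :=
  calc μ v ≤ μ (v ∩ (s ∪ ⋃ i, t i)) := measure_mono_ae (h.mono fun _ hx hv => ⟨hv, hx⟩)
    _ ≤ μ (v ∩ s) + μ (⋃ i, v ∩ t i) := by
      rw [inter_union_distrib_left, inter_iUnion]
      exact measure_union_le _ _
    _ ≤ μ (v ∩ s) + ∑' i, μ (v ∩ t i) := by gcongr; exact measure_iUnion_le _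

theorem MeasureTheory.tendsto_measure_inter_atTop_nhds_zero {α : Type*} [MeasurableSpace α]
    {μ : Measure α} {s : Set α} (hs : μ s ≠ ⊤) {v : ℕ → Set α} (hv : ∀ k, MeasurableSet (v k))
    (hd : Pairwise (Function.onFun Disjoint v)) :
    Tendsto (fun k => μ (v k ∩ s)) atTop (𝓝 0) := by
  have : IsFiniteMeasure (μ.restrict s) := isFiniteMeasure_restrict.2 hs
  refine ENNReal.tendsto_atTop_zero_of_tsum_ne_top ?_
  simp_rw [← Measure.restrict_apply (hv _), ← measure_iUnion hd hv]
  exact measure_ne_top _ _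

section Dilation

variable {E : Type*} [NormedAddCommGroup E] [NormedSpace ℝ E] [FiniteDimensional ℝ E]
  [MeasurableSpace E] [BorelSpace E] (μ : Measure E) [μ.IsAddHaarMeasure]

theorem MeasureTheory.Measure.addHaar_image_zpow_sub_natCast (A : E ≃ₗ[ℝ] E) (s : Set E)
    (J : ℤ) (m : ℕ) :
    μ ((A ^ (J - m)) '' s) =
      (ENNReal.ofReal |LinearMap.det A.toLinearMap|)⁻¹ ^ m * μ ((A ^ J) '' s) := by
  set d := ENNReal.ofReal |LinearMap.det A.toLinearMap|
  have hd : d ≠ 0 := by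
    simpa [d] using LinearEquiv.isUnit_det' A |>.ne_zero
  have himage (t : Set E) : μ (A '' t) = d * μ t := by
    simpa using addHaar_image_linearMap μ A.toLinearMap t
  induction m with
  | zero => simp
  | succ m ih =>
    have hpow : A ^ (J - m) = A * A ^ (J - (m + 1 : ℕ)) := by
      rw [← zpow_one_add]
      congr 1
      push_cast
      ring
    have hstep : (A ^ (J - m)) '' s = A '' ((A ^ (J - (m + 1 : ℕ))) '' s) := by
      rw [hpow, image_image]
      rfl
    rw [hstep, himage] at ih
    rw [pow_succ', mul_assoc, ← ih, ← mul_assoc, ENNReal.inv_mul_cancel hd ENNReal.ofReal_ne_top,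
      one_mul]

theorem MeasureTheory.Measure.addHaar_iUnion_zpow_sub_image_lt_top (A : E ≃ₗ[ℝ] E)
    (hA : 1 < |LinearMap.det A.toLinearMap|) {s : Set E} (hs : μ s ≠ ⊤) (J : ℤ) :
    μ (⋃ m : ℕ, (A ^ (J - m)) '' s) < ⊤ := by
  have hr : (ENNReal.ofReal |LinearMap.det A.toLinearMap|)⁻¹ < 1 :=
    ENNReal.inv_lt_one.2 (by simpa using hA)
  calc μ (⋃ m : ℕ, (A ^ (J - m)) '' s) ≤ ∑' m : ℕ, μ ((A ^ (J - m)) '' s) := measure_iUnion_le _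
    _ = (∑' m : ℕ, (ENNReal.ofReal |LinearMap.det A.toLinearMap|)⁻¹ ^ m) * μ ((A ^ J) '' s) := by
      simp_rw [addHaar_image_zpow_sub_natCast, ENNReal.tsum_mul_right]
    _ < ⊤ := by
      refine ENNReal.mul_lt_top ?_ ?_
      · rw [ENNReal.tsum_geometric]
        exact ENNReal.inv_lt_top.2 (tsub_pos_of_lt hr)
      · rw [← LinearEquiv.coe_toLinearMap, addHaar_image_linearMap]
        exact ENNReal.mul_lt_top ENNReal.ofReal_lt_top hs.lt_top

end Dilation

theorem stmt10_general (n : ℕ)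
    (A : EuclideanSpace ℝ (Fin n) ≃ₗ[ℝ] EuclideanSpace ℝ (Fin n))
    (hdet : 1 < |LinearMap.det A.toLinearMap|)
    (L : EuclideanSpace ℝ (Fin n) ≃ₗ[ℝ] EuclideanSpace ℝ (Fin n))
    (Γ : Set (EuclideanSpace ℝ (Fin n)))
    (hΓ : Γ = Set.range fun k : Fin n → ℤ => L (WithLp.toLp 2 (fun i => (k i : ℝ))))
    (W : Set (EuclideanSpace ℝ (Fin n))) (hW : MeasurableSet W)
    (ε : ℝ≥0∞) (hε : 0 < ε)
    (V : ℕ → Set (EuclideanSpace ℝ (Fin n)))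
    (hVmeas : ∀ k, MeasurableSet (V k))
    (hVdisj : Pairwise (Function.onFun Disjoint V))
    (hVε : ∀ k, ε ≤ volume (V k))
    (ha : Filter.Tendsto
      (fun J : ℕ => ⨆ k : ℕ, ∑' j : ℕ, volume (V k ∩ (A ^ ((J : ℤ) + j)) '' W))
      Filter.atTop (nhds 0)) :
    ¬ ((∀ᵐ x : EuclideanSpace ℝ (Fin n), ∃! j : ℤ, x ∈ (A ^ j) '' W) ∧
       (∀ᵐ x : EuclideanSpace ℝ (Fin n), ∃! γ, γ ∈ Γ ∧ x + γ ∈ W)) := by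
  rintro ⟨hdil, htr⟩
  rw [hΓ, EuclideanSpace.range_intCast_map_eq_span] at htr
  have hWfin : volume W ≠ ⊤ :=
    (ZSpan.measure_lt_top_of_ae_existsUnique_add_mem _ volume hW.nullMeasurableSet htr).ne
  obtain ⟨J, hJ⟩ := (ha.eventually_lt_const hε).exists
  set a := ⨆ k : ℕ, ∑' j : ℕ, volume (V k ∩ (A ^ ((J : ℤ) + j)) '' W)
  set S := ⋃ m : ℕ, (A ^ ((J : ℤ) - 1 - m)) '' W
  have hSfin : volume S ≠ ⊤ := (volume.addHaar_iUnion_zpow_sub_image_lt_top A hdet hWfin _).ne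
  have hcover : ∀ᵐ x, x ∈ S ∪ ⋃ i : ℕ, (A ^ ((J : ℤ) + i)) '' W := hdil.mono fun x hx => by
    have hx' : x ∈ ⋃ j : ℤ, (A ^ j) '' W := mem_iUnion.2 hx.exists
    rwa [iUnion_int_eq_iUnion_sub_union_iUnion_add _ (J : ℤ)] at hx'
  have hVS (k : ℕ) : ε - a ≤ volume (V k ∩ S) := by
    refine tsub_le_iff_right.2 ?_
    calc ε ≤ volume (V k) := hVε k
      _ ≤ volume (V k ∩ S) + ∑' i : ℕ, volume (V k ∩ (A ^ ((J : ℤ) + i)) '' W) :=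
        measure_le_measure_inter_add_tsum_of_ae_mem hcover _
      _ ≤ volume (V k ∩ S) + a := by
        gcongr
        exact le_iSup (fun k => ∑' j : ℕ, volume (V k ∩ (A ^ ((J : ℤ) + j)) '' W)) k
  obtain ⟨k, hk⟩ := ((tendsto_measure_inter_atTop_nhds_zero hSfin hVmeas hVdisj).eventually_lt_const
    (tsub_pos_of_lt hJ)).exists
  exact (hVS k).not_gt hk

/-- General principle for non-existence of wavelet sets: if some dilation-tiling generator `U`
contains infinitely many disjoint sets `V k` of measure at least `ε` such that
`a_J := sup_k ∑_{j ≥ J} |V k ∩ A^j(W)| → 0` as `J → ∞`, then `W` is not an `(A,Γ)` wavelet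
set, i.e. `W` does not simultaneously tile by `A`-dilations and by `Γ`-translations. -/
theorem stmt10 (n : ℕ)
    (A : EuclideanSpace ℝ (Fin n) ≃ₗ[ℝ] EuclideanSpace ℝ (Fin n))
    (hdet : 1 < |LinearMap.det A.toLinearMap|)
    (L : EuclideanSpace ℝ (Fin n) ≃ₗ[ℝ] EuclideanSpace ℝ (Fin n))
    (Γ : Set (EuclideanSpace ℝ (Fin n)))
    (hΓ : Γ = Set.range fun k : Fin n → ℤ => L (WithLp.toLp 2 (fun i => (k i : ℝ))))
    (W : Set (EuclideanSpace ℝ (Fin n))) (hW : MeasurableSet W)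
    (ε : ℝ≥0∞) (hε : 0 < ε)
    (U : Set (EuclideanSpace ℝ (Fin n))) (hU : MeasurableSet U)
    (hUtile : ∀ᵐ x : EuclideanSpace ℝ (Fin n), ∃! j : ℤ, x ∈ (A ^ j) '' U)
    (V : ℕ → Set (EuclideanSpace ℝ (Fin n)))
    (hVmeas : ∀ k, MeasurableSet (V k))
    (hVsub : ∀ k, V k ⊆ U)
    (hVdisj : Pairwise (Function.onFun Disjoint V))
    (hVε : ∀ k, ε ≤ volume (V k))
    (ha : Filter.Tendsto
      (fun J : ℕ => ⨆ k : ℕ, ∑' j : ℕ, volume (V k ∩ (A ^ ((J : ℤ) + j)) '' W))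
      Filter.atTop (nhds 0)) :
    ¬ ((∀ᵐ x : EuclideanSpace ℝ (Fin n), ∃! j : ℤ, x ∈ (A ^ j) '' W) ∧
       (∀ᵐ x : EuclideanSpace ℝ (Fin n), ∃! γ, γ ∈ Γ ∧ x + γ ∈ W)) :=
  stmt10_general n A hdet L Γ hΓ W hW ε hε V hVmeas hVdisj hVε ha
end

section
/- Let A be an n×n integer matrix with |det A| ≥ 2. Then there exists a constant C depending only on n such that #(ℤⁿ ∩ A^j(B(0,r))) ≤ C · max(1, rⁿ) · max(1, |det A|^j) for all j ∈ ℤ and r > 0. -/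
/-!
Let `N` be the integer matrix of `A`, so that `A ^ p` has matrix `N ^ p` for `p ≥ 0`. A lattice
point `x ∈ T(B(0,r))`, `T = A ^ p`, is determined by its class in `ℤⁿ / Nᵖℤⁿ` together with the
integer parts of the coordinates of `T⁻¹x`, which lie in `[⌊-r⌋, ⌊r⌋]`: two points agreeing in
both differ by `T u` with `u ∈ ℤⁿ` and all `|uᵢ| < 1`. As `#(ℤⁿ / Nᵖℤⁿ) = |det N|ᵖ`, there are at
most `(2r + 2)ⁿ |det A|ᵖ` such points. For `j = -p < 0`, `A ^ p` maps `ℤⁿ ∩ A^j(B(0,r))`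
injectively into `ℤⁿ ∩ B(0,r)`, which is the case `p = 0`.
-/

open scoped ENNReal

namespace LatticePointCount

open Set Metric Function Matrix

variable {n : ℕ}

def castVec (k : Fin n → ℤ) : EuclideanSpace ℝ (Fin n) := WithLp.toLp 2 (fun i => (k i : ℝ))

@[simp]
lemma castVec_apply (k : Fin n → ℤ) (i : Fin n) : castVec k i = k i := rfl

lemma castVec_injective : Injective (castVec (n := n)) := fun k k' h => by
  ext i
  simpa using congr($h i)

@[simp]
lemma castVec_sub (k k' : Fin n → ℤ) : castVec (k - k') = castVec k - castVec k' := by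
  ext i; simp

lemma castVec_single (j : Fin n) : castVec (Pi.single j 1) = EuclideanSpace.single j 1 := by
  ext i
  by_cases h : i = j <;> simp [h]

lemma range_castVec :
    range (castVec (n := n)) = {x : EuclideanSpace ℝ (Fin n) | ∀ i, ∃ m : ℤ, x i = m} := by
  ext x
  refine ⟨by rintro ⟨k, rfl⟩ i; exact ⟨k i, rfl⟩, fun hx => ?_⟩
  choose k hk using hx
  exact ⟨k, by ext i; exact (hk i).symm⟩

lemma toLp_map_mulVec_castVec (N : Matrix (Fin n) (Fin n) ℤ) (k : Fin n → ℤ) :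
    WithLp.toLp 2 (N.map ((↑) : ℤ → ℝ) *ᵥ fun i => (k i : ℝ)) = castVec (N *ᵥ k) := by
  ext i
  exact (RingHom.map_mulVec (Int.castRingHom ℝ) N k i).symm

def HasIntMatrix (T : EuclideanSpace ℝ (Fin n) ≃ₗ[ℝ] EuclideanSpace ℝ (Fin n))
    (N : Matrix (Fin n) (Fin n) ℤ) : Prop :=
  ∀ v, T (WithLp.toLp 2 v) = WithLp.toLp 2 (N.map ((↑) : ℤ → ℝ) *ᵥ v)

lemma exists_intMatrix (T : EuclideanSpace ℝ (Fin n) ≃ₗ[ℝ] EuclideanSpace ℝ (Fin n))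
    (hT : ∀ k, ∃ m, T (castVec k) = castVec m) :
    ∃ N : Matrix (Fin n) (Fin n) ℤ, HasIntMatrix T N := by
  choose col hcol using fun j => hT (Pi.single j 1)
  refine ⟨Matrix.of fun i j => col j i, fun v => ?_⟩
  have key : T.toLinearMap ∘ₗ (WithLp.linearEquiv 2 ℝ (Fin n → ℝ)).symm.toLinearMap =
      (WithLp.linearEquiv 2 ℝ (Fin n → ℝ)).symm.toLinearMap ∘ₗ
        ((Matrix.of fun i j => col j i).map ((↑) : ℤ → ℝ)).mulVecLin := by
    ext j i
    have h := congr($(hcol j) i)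
    rw [castVec_single, castVec_apply] at h
    simp [← h]
  exact congr($key v)

namespace HasIntMatrix

variable {T : EuclideanSpace ℝ (Fin n) ≃ₗ[ℝ] EuclideanSpace ℝ (Fin n)}
  {N : Matrix (Fin n) (Fin n) ℤ}

lemma apply_castVec (h : HasIntMatrix T N) (k : Fin n → ℤ) : T (castVec k) = castVec (N *ᵥ k) :=
  (h _).trans (toLp_map_mulVec_castVec N k)

lemma det_eq (h : HasIntMatrix T N) : LinearMap.det T.toLinearMap = N.det := by
  let b := (EuclideanSpace.basisFun (Fin n) ℝ).toBasis
  have hmat : LinearMap.toMatrix b b T.toLinearMap = N.map ((↑) : ℤ → ℝ) := by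
    ext i j
    rw [LinearMap.toMatrix_apply]
    simp [b, ← castVec_single, h.apply_castVec]
  rw [← LinearMap.det_toMatrix b, hmat, Int.cast_det]

lemma pow (h : HasIntMatrix T N) (p : ℕ) : HasIntMatrix (T ^ p) (N ^ p) := by
  induction p with
  | zero => intro v; simp
  | succ p ih =>
    intro v
    rw [pow_succ, LinearEquiv.mul_apply, h v, ih, mulVec_mulVec, pow_succ]
    exact congr(WithLp.toLp 2 ($((Matrix.map_mul (f := Int.castRingHom ℝ)).symm) *ᵥ v))

end HasIntMatrix

lemma natCard_quotient_range_eq_natAbs_det {M : Type*} [AddCommGroup M] [Module.Free ℤ M]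
    [Module.Finite ℤ M] {f : M →ₗ[ℤ] M} (hf : Injective f) :
    Nat.card (M ⧸ LinearMap.range f) = (LinearMap.det f).natAbs := by
  rw [← Submodule.natAbs_det_equiv (LinearMap.range f) (LinearEquiv.ofInjective f hf)]
  rfl

lemma encard_range_castVec_inter_image_ball_le
    {T : EuclideanSpace ℝ (Fin n) ≃ₗ[ℝ] EuclideanSpace ℝ (Fin n)}
    {N : Matrix (Fin n) (Fin n) ℤ} (hTN : HasIntMatrix T N) (r : ℝ) :
    (range castVec ∩ T '' ball 0 r).encard ≤
      ((Finset.Icc ⌊-r⌋ ⌊r⌋).card ^ n * N.det.natAbs : ℕ) := by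
  set B := Matrix.toLin' N
  have hB : ∀ k, T (castVec k) = castVec (B k) := hTN.apply_castVec
  have hB_inj : Injective B := fun k k' hkk' =>
    castVec_injective (T.injective (by rw [hB, hB, hkk']))
  have hcard : Nat.card ((Fin n → ℤ) ⧸ LinearMap.range B) = N.det.natAbs := by
    rw [natCard_quotient_range_eq_natAbs_det hB_inj, LinearMap.det_toLin']
  have hdet : N.det ≠ 0 := by
    have := T.isUnit_det'.ne_zero
    rwa [hTN.det_eq, Int.cast_ne_zero] at this
  have : Finite ((Fin n → ℤ) ⧸ LinearMap.range B) :=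
    Nat.finite_of_card_ne_zero (by rwa [hcard, Int.natAbs_ne_zero])
  set K := {k | T.symm (castVec k) ∈ ball 0 r}
  set F := Fintype.piFinset fun _ : Fin n => Finset.Icc ⌊-r⌋ ⌊r⌋
  set φ : (Fin n → ℤ) → ((Fin n → ℤ) ⧸ LinearMap.range B) × (Fin n → ℤ) :=
    fun k => (Submodule.Quotient.mk k, fun i => ⌊T.symm (castVec k) i⌋)
  have hsub : range castVec ∩ T '' ball 0 r ⊆ castVec '' K := by
    rintro _ ⟨⟨k, rfl⟩, y, hy, hyk⟩
    exact ⟨k, by simpa [K, ← hyk] using hy, rfl⟩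
  have hmaps : MapsTo φ K (univ ×ˢ F) := by
    intro k hk
    refine ⟨mem_univ _, Fintype.mem_piFinset.2 fun i => Finset.mem_Icc.2 ?_⟩
    have hi := abs_lt.1 ((PiLp.norm_apply_le _ i).trans_lt (mem_ball_zero_iff.1 hk))
    exact ⟨Int.floor_le_floor hi.1.le, Int.floor_le_floor hi.2.le⟩
  have hinj : InjOn φ K := by
    intro k _ k' _ hφ
    obtain ⟨u, hu⟩ := (Submodule.Quotient.eq _).1 (Prod.ext_iff.1 hφ).1
    have hdiff : T.symm (castVec k) - T.symm (castVec k') = castVec u := by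
      rw [← map_sub, ← castVec_sub, ← hu, ← hB, LinearEquiv.symm_apply_apply]
    have hu0 : u = 0 := by
      ext i
      have hlt := Int.abs_sub_lt_one_of_floor_eq_floor (congr_fun (Prod.ext_iff.1 hφ).2 i)
      rw [← PiLp.sub_apply, hdiff, castVec_apply, ← Int.cast_abs, ← Int.cast_one,
        Int.cast_lt] at hlt
      exact Int.abs_lt_one_iff.1 hlt
    rw [← sub_eq_zero, ← hu, hu0, map_zero]
  calc (range castVec ∩ T '' ball 0 r).encard
      ≤ (castVec '' K).encard := encard_mono hsub
    _ ≤ K.encard := encard_image_le _ _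
    _ ≤ (univ ×ˢ (F : Set (Fin n → ℤ))).encard := encard_le_encard_of_injOn hmaps hinj
    _ = _ := by
      rw [encard_prod, encard_univ, ENat.card_eq_coe_natCard, hcard,
        encard_coe_eq_coe_finsetCard, Fintype.card_piFinset, Finset.prod_const]
      simp [mul_comm]

lemma encard_range_castVec_inter_symm_image_le
    {T : EuclideanSpace ℝ (Fin n) ≃ₗ[ℝ] EuclideanSpace ℝ (Fin n)}
    (hT : ∀ k, ∃ m, T (castVec k) = castVec m) (s : Set (EuclideanSpace ℝ (Fin n))) :
    (range castVec ∩ T.symm '' s).encard ≤ (range castVec ∩ s).encard := by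
  rw [← T.injective.injOn.encard_image]
  refine encard_mono ?_
  rintro _ ⟨_, ⟨⟨k, hk⟩, y, hy, rfl⟩, rfl⟩
  obtain ⟨m, hm⟩ := hT k
  rw [T.apply_symm_apply]
  exact ⟨⟨m, by rw [← hm, hk, T.apply_symm_apply]⟩, hy⟩

lemma card_Icc_floor_neg_floor_le {r : ℝ} (hr : 0 ≤ r) :
    ((Finset.Icc ⌊-r⌋ ⌊r⌋).card : ℝ) ≤ 2 * r + 2 := by
  have hnonneg : 0 ≤ ⌊r⌋ + 1 - ⌊-r⌋ := by
    have := Int.floor_nonneg.2 hr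
    have := Int.floor_nonpos (show -r ≤ 0 by linarith)
    omega
  rw [Int.card_Icc, show ((⌊r⌋ + 1 - ⌊-r⌋).toNat : ℝ) = ((⌊r⌋ + 1 - ⌊-r⌋ : ℤ) : ℝ) by
    exact_mod_cast Int.toNat_of_nonneg hnonneg]
  push_cast
  linarith [Int.floor_le r, Int.sub_one_lt_floor (-r)]

lemma two_mul_add_two_pow_le {r : ℝ} (hr : 0 ≤ r) (n : ℕ) :
    (2 * r + 2) ^ n ≤ 4 ^ n * max 1 (r ^ n) := by
  rcases le_total r 1 with h | h
  · calc (2 * r + 2) ^ n ≤ 4 ^ n := pow_le_pow_left₀ (by linarith) (by linarith) n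
      _ ≤ 4 ^ n * max 1 (r ^ n) := le_mul_of_one_le_right (by positivity) (le_max_left _ _)
  · calc (2 * r + 2) ^ n ≤ (4 * r) ^ n := pow_le_pow_left₀ (by linarith) (by linarith) n
      _ ≤ 4 ^ n * max 1 (r ^ n) := by
        rw [mul_pow]; exact mul_le_mul_of_nonneg_left (le_max_right _ _) (by positivity)

lemma coe_encard_le_ofReal {α : Type*} {s : Set α} {m : ℕ} {c : ℝ} (hs : s.encard ≤ m)
    (hm : (m : ℝ) ≤ c) : (s.encard : ℝ≥0∞) ≤ ENNReal.ofReal c := by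
  calc (s.encard : ℝ≥0∞) ≤ ((m : ℕ∞) : ℝ≥0∞) := by exact_mod_cast hs
    _ = ENNReal.ofReal m := by simp
    _ ≤ ENNReal.ofReal c := ENNReal.ofReal_le_ofReal hm

end LatticePointCount

open LatticePointCount Set

/-- Lattice counting estimate: for an integer dilation matrix `A` (here encoded as a linear
automorphism of `ℝⁿ` mapping `ℤⁿ` into `ℤⁿ`) with `|det A| ≥ 2`, there is a constant `C`
depending only on `n` such that
`#(ℤⁿ ∩ A^j(B(0,r))) ≤ C * max(1, rⁿ) * max(1, |det A|^j)` for all `j ∈ ℤ` and `r > 0`. -/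
theorem stmt12 (n : ℕ) :
    ∃ C : ℝ, 0 < C ∧
      ∀ A : EuclideanSpace ℝ (Fin n) ≃ₗ[ℝ] EuclideanSpace ℝ (Fin n),
        (∀ k : Fin n → ℤ, ∃ m : Fin n → ℤ,
          A (WithLp.toLp 2 (fun i => (k i : ℝ))) = WithLp.toLp 2 (fun i => (m i : ℝ))) →
        2 ≤ |LinearMap.det A.toLinearMap| →
        ∀ (j : ℤ) (r : ℝ), 0 < r →
          (({x : EuclideanSpace ℝ (Fin n) | ∀ i, ∃ m : ℤ, x i = (m : ℝ)} ∩
              (A ^ j) '' Metric.ball 0 r).encard : ℝ≥0∞) ≤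
            ENNReal.ofReal (C * max 1 (r ^ n) *
              max 1 (|LinearMap.det A.toLinearMap| ^ j)) := by
  refine ⟨4 ^ n, by positivity, fun A hA _ j r hr => ?_⟩
  obtain ⟨N, hN⟩ := exists_intMatrix A hA
  have hpow (p : ℕ) : (range castVec ∩ (A ^ p) '' Metric.ball 0 r).encard ≤
      ((Finset.Icc ⌊-r⌋ ⌊r⌋).card ^ n * N.det.natAbs ^ p : ℕ) := by
    simpa [Matrix.det_pow, Int.natAbs_pow] using
      encard_range_castVec_inter_image_ball_le (hN.pow p) r
  have hcube : ((Finset.Icc ⌊-r⌋ ⌊r⌋).card : ℝ) ^ n ≤ 4 ^ n * max 1 (r ^ n) :=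
    (pow_le_pow_left₀ (by positivity) (card_Icc_floor_neg_floor_le hr.le) n).trans
      (two_mul_add_two_pow_le hr.le n)
  rw [← range_castVec, hN.det_eq]
  obtain ⟨p, rfl | rfl⟩ := j.eq_nat_or_neg
  · rw [zpow_natCast, zpow_natCast]
    refine coe_encard_le_ofReal (hpow p) ?_
    rw [Nat.cast_mul, Nat.cast_pow, Nat.cast_pow, Nat.cast_natAbs, Int.cast_abs]
    exact mul_le_mul hcube (le_max_right _ _) (by positivity) (by positivity)
  · have hball := encard_range_castVec_inter_symm_image_le
      (fun k => ⟨_, (hN.pow p).apply_castVec k⟩) (Metric.ball 0 r)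
    rw [zpow_neg, zpow_natCast]
    have hball' : (range (castVec (n := n)) ∩ Metric.ball 0 r).encard ≤
        ((Finset.Icc ⌊-r⌋ ⌊r⌋).card ^ n : ℕ) := by
      simpa only [pow_zero, mul_one, LinearEquiv.coe_one, image_id] using hpow 0
    refine coe_encard_le_ofReal (hball.trans hball') ?_
    rw [Nat.cast_pow]
    exact hcube.trans (le_mul_of_one_le_right (by positivity) (le_max_left _ _))
end

section
/- Let A be an invertible n×n matrix. Then there exist a constant c ≥ 1 and an n×n matrix Ã all of whose eigenvalues are positive real numbers, such that for all j ∈ ℤ and r > 0: A^j(B(0, r/c)) ⊆ Ã^j(B(0,r)) ⊆ A^j(B(0, cr)). -/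
/-!
Over `ℂ`, let `Aₛ` be the semisimple part of `A`, acting as `λ` on the generalized eigenspace of
each eigenvalue `λ`. Applying the function `λ ↦ |λ| / λ` to `Aₛ` gives an operator `S`: it is a
polynomial in `A` (Hermite interpolation with vanishing derivatives at the eigenvalues), real
because the spectrum of `A` is closed under conjugation, and `S ^ j = ∑ (|λ| / λ) ^ j Pλ` with
`Pλ` the spectral projections, so `‖S ^ j‖ ≤ ∑ ‖Pλ‖ =: c` for every `j ∈ ℤ`. The eigenvalues of
`Ã = A S` are the `|λ| > 0`, and since `Ã ^ j = A ^ j S ^ j` the balls `Ã ^ j B(0, r)` and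
`A ^ j B(0, r)` differ by at most the factor `c`.
-/

open Polynomial

namespace Polynomial

variable {K : Type*} [Field K]

/-- Hermite interpolation of `g` at the nodes `Λ` with all derivatives of order `< m` prescribed
to vanish. -/
def IsFlatInterpolant (Λ : Finset K) (m : ℕ) (q : K[X]) (g : K → K) : Prop :=
  ∀ l ∈ Λ, (X - C l) ^ m ∣ q - C (g l)

variable {Λ : Finset K} {m : ℕ} {q q' : K[X]} {g g' : K → K}

theorem exists_isFlatInterpolant (Λ : Finset K) (m : ℕ) (g : K → K) :
    ∃ q, IsFlatInterpolant Λ m q g := by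
  have hcop : Pairwise (Function.onFun IsCoprime
      fun l : Λ ↦ Ideal.span {(X - C (l : K)) ^ m}) := fun l l' hne ↦ by
    rw [Function.onFun, Ideal.isCoprime_span_singleton_iff]
    exact (pairwise_coprime_X_sub_C Subtype.val_injective hne).pow
  obtain ⟨q, hq⟩ := Ideal.exists_forall_sub_mem_ideal hcop fun l ↦ C (g l)
  exact ⟨q, fun l hl ↦ Ideal.mem_span_singleton.mp (hq ⟨l, hl⟩)⟩

theorem isFlatInterpolant_C (Λ : Finset K) (m : ℕ) (c : K) :
    IsFlatInterpolant Λ m (C c) fun _ ↦ c :=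
  fun _ _ ↦ by rw [sub_self]; exact dvd_zero _

namespace IsFlatInterpolant

theorem add (hq : IsFlatInterpolant Λ m q g) (hq' : IsFlatInterpolant Λ m q' g') :
    IsFlatInterpolant Λ m (q + q') (g + g') := fun l hl ↦ by
  have := dvd_add (hq l hl) (hq' l hl)
  rwa [Pi.add_apply, C_add, add_sub_add_comm]

theorem mul (hq : IsFlatInterpolant Λ m q g) (hq' : IsFlatInterpolant Λ m q' g') :
    IsFlatInterpolant Λ m (q * q') (g * g') := fun l hl ↦ by
  have key : q * q' - C ((g * g') l) =
      (q - C (g l)) * q' + C (g l) * (q' - C (g' l)) := by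
    rw [Pi.mul_apply, C_mul]; ring
  rw [key]
  exact dvd_add ((hq l hl).mul_right _) ((hq' l hl).mul_left _)

theorem congr (hq : IsFlatInterpolant Λ m q g) (hg : Set.EqOn g g' Λ) :
    IsFlatInterpolant Λ m q g' := fun l hl ↦ hg hl ▸ hq l hl

theorem eval_eq (hq : IsFlatInterpolant Λ m q g) (hm : m ≠ 0) {l : K} (hl : l ∈ Λ) :
    q.eval l = g l := by
  obtain ⟨t, ht⟩ := hq l hl
  simpa [sub_eq_zero, zero_pow hm] using congrArg (eval l) ht

theorem prod_dvd_sub (hq : IsFlatInterpolant Λ m q g) (hq' : IsFlatInterpolant Λ m q' g) :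
    ∏ l ∈ Λ, (X - C l) ^ m ∣ q - q' := by
  refine Finset.prod_dvd_of_coprime
    (fun l _ l' _ hne ↦ (pairwise_coprime_X_sub_C Function.injective_id hne).pow) fun l hl ↦ ?_
  simpa using dvd_sub (hq l hl) (hq' l hl)

end IsFlatInterpolant

theorem aeval_eq_of_isFlatInterpolant {R : Type*} [Ring R] [Algebra K R] {a : R}
    (ha : aeval a (∏ l ∈ Λ, (X - C l) ^ m) = 0) (hq : IsFlatInterpolant Λ m q g)
    (hq' : IsFlatInterpolant Λ m q' g) : aeval a q = aeval a q' := by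
  obtain ⟨t, ht⟩ := hq.prod_dvd_sub hq'
  rw [← sub_eq_zero, ← map_sub, ht, map_mul, ha, zero_mul]

end Polynomial

section SpectralCalculus

variable {K R : Type*} [Field K] [Ring R] [Algebra K R] {a : R} {Λ : Finset K} {m : ℕ}

theorem spectrum_subset_of_aeval_prod_eq_zero (ha : aeval a (∏ l ∈ Λ, (X - C l) ^ m) = 0) :
    spectrum K a ⊆ Λ := by
  intro z hz
  rcases subsingleton_or_nontrivial R with _ | _
  · simp [spectrum.of_subsingleton] at hz
  have h : eval z (∏ l ∈ Λ, (X - C l) ^ m) ∈ spectrum K (aeval a (∏ l ∈ Λ, (X - C l) ^ m)) :=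
    spectrum.subset_polynomial_aeval a _ ⟨z, hz, rfl⟩
  rw [ha, spectrum.zero_eq, Set.mem_singleton_iff, eval_prod, Finset.prod_eq_zero_iff] at h
  obtain ⟨l, hl, hzl⟩ := h
  simp only [eval_pow, eval_sub, eval_X, eval_C] at hzl
  rwa [sub_eq_zero.mp (pow_eq_zero_iff'.mp hzl).1]

/-- `g ↦ g(aₛ)` for the semisimple part `aₛ` of `a`, which acts as `l` on the generalized
`l`-eigenspace. -/
noncomputable def spectralCalculus (ha : aeval a (∏ l ∈ Λ, (X - C l) ^ m) = 0) :
    (K → K) →ₐ[K] R where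
  toFun g := aeval a (exists_isFlatInterpolant Λ m g).choose
  map_one' := by
    rw [aeval_eq_of_isFlatInterpolant ha (exists_isFlatInterpolant Λ m 1).choose_spec
      (isFlatInterpolant_C Λ m 1), aeval_C, map_one]
  map_mul' g g' := by
    rw [← map_mul]
    exact aeval_eq_of_isFlatInterpolant ha (exists_isFlatInterpolant Λ m _).choose_spec
      ((exists_isFlatInterpolant Λ m g).choose_spec.mul
        (exists_isFlatInterpolant Λ m g').choose_spec)
  map_zero' := by
    rw [aeval_eq_of_isFlatInterpolant ha (exists_isFlatInterpolant Λ m 0).choose_spec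
      (isFlatInterpolant_C Λ m 0), aeval_C, map_zero]
  map_add' g g' := by
    rw [← map_add]
    exact aeval_eq_of_isFlatInterpolant ha (exists_isFlatInterpolant Λ m _).choose_spec
      ((exists_isFlatInterpolant Λ m g).choose_spec.add
        (exists_isFlatInterpolant Λ m g').choose_spec)
  commutes' c := (aeval_eq_of_isFlatInterpolant ha (exists_isFlatInterpolant Λ m _).choose_spec
      (isFlatInterpolant_C Λ m c)).trans (aeval_C a c)

variable (ha : aeval a (∏ l ∈ Λ, (X - C l) ^ m) = 0)

theorem spectralCalculus_eq_aeval {q : K[X]} {g : K → K} (hq : IsFlatInterpolant Λ m q g) :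
    spectralCalculus ha g = aeval a q :=
  aeval_eq_of_isFlatInterpolant ha (exists_isFlatInterpolant Λ m g).choose_spec hq

theorem spectralCalculus_congr {g g' : K → K} (hg : Set.EqOn g g' Λ) :
    spectralCalculus ha g = spectralCalculus ha g' := by
  obtain ⟨q, hq⟩ := exists_isFlatInterpolant Λ m g
  rw [spectralCalculus_eq_aeval ha hq, spectralCalculus_eq_aeval ha (hq.congr hg)]

theorem commute_spectralCalculus (g : K → K) : Commute a (spectralCalculus ha g) := by
  obtain ⟨q, hq⟩ := exists_isFlatInterpolant Λ m g
  simpa [spectralCalculus_eq_aeval ha hq] using (Commute.all X q).map (aeval a)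

theorem spectrum_mul_spectralCalculus_subset [IsAlgClosed K] [FiniteDimensional K R]
    (g : K → K) : spectrum K (a * spectralCalculus ha g) ⊆ (fun l ↦ l * g l) '' Λ := by
  nontriviality R
  have hm : m ≠ 0 := by
    rintro rfl
    simp at ha
  obtain ⟨q, hq⟩ := exists_isFlatInterpolant Λ m g
  have hmul : a * aeval a q = aeval a (X * q) := by rw [map_mul, aeval_X]
  rw [spectralCalculus_eq_aeval ha hq, hmul, spectrum.map_polynomial_aeval_of_nonempty _ _
    (spectrum.nonempty_of_isAlgClosed_of_finiteDimensional K a)]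
  rintro _ ⟨z, hz, rfl⟩
  have hzΛ := spectrum_subset_of_aeval_prod_eq_zero ha hz
  exact ⟨z, hzΛ, by simp only [eval_mul, eval_X, hq.eval_eq hm hzΛ]⟩

noncomputable def spectralCalculusUnit {g : K → K} (hg : ∀ l ∈ Λ, g l ≠ 0) : Rˣ where
  val := spectralCalculus ha g
  inv := spectralCalculus ha g⁻¹
  val_inv := by
    rw [← map_mul, ← map_one (spectralCalculus ha)]
    exact spectralCalculus_congr ha fun l hl ↦ mul_inv_cancel₀ (hg l hl)
  inv_val := by
    rw [← map_mul, ← map_one (spectralCalculus ha)]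
    exact spectralCalculus_congr ha fun l hl ↦ inv_mul_cancel₀ (hg l hl)

theorem val_spectralCalculusUnit_zpow {g : K → K} (hg : ∀ l ∈ Λ, g l ≠ 0) (j : ℤ) :
    ((spectralCalculusUnit ha hg ^ j : Rˣ) : R) = spectralCalculus ha (g ^ j) := by
  cases j with
  | ofNat k => simp [spectralCalculusUnit]
  | negSucc k => simp [spectralCalculusUnit, zpow_negSucc, ← inv_pow]

end SpectralCalculus

section Norm

variable {K R : Type*} [NormedField K] [NormedRing R] [NormedAlgebra K R] {a : R} {Λ : Finset K}
  {m : ℕ} (ha : aeval a (∏ l ∈ Λ, (X - C l) ^ m) = 0)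

open Classical in
theorem norm_spectralCalculus_le {g : K → K} (hg : ∀ l ∈ Λ, ‖g l‖ ≤ 1) :
    ‖spectralCalculus ha g‖ ≤ ∑ l ∈ Λ, ‖spectralCalculus ha (Pi.single l 1)‖ := by
  have hsum : spectralCalculus ha g = ∑ l ∈ Λ, g l • spectralCalculus ha (Pi.single l 1) := by
    simp_rw [← map_smul, ← map_sum]
    refine spectralCalculus_congr ha fun k hk ↦ ?_
    simp [Pi.single_apply, Finset.mem_coe.mp hk]
  calc ‖spectralCalculus ha g‖ ≤ ∑ l ∈ Λ, ‖g l‖ * ‖spectralCalculus ha (Pi.single l 1)‖ := by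
        rw [hsum]
        exact (norm_sum_le _ _).trans (Finset.sum_le_sum fun l _ ↦ norm_smul_le _ _)
    _ ≤ ∑ l ∈ Λ, ‖spectralCalculus ha (Pi.single l 1)‖ :=
        Finset.sum_le_sum fun l hl ↦ mul_le_of_le_one_left (norm_nonneg _) (hg l hl)

end Norm

section Conj

open ComplexConjugate

variable {Λ : Finset ℂ} {m : ℕ} {g : ℂ → ℂ}

theorem Polynomial.IsFlatInterpolant.map_conj {q : ℂ[X]} (hq : IsFlatInterpolant Λ m q g)
    (hΛ : ∀ l ∈ Λ, conj l ∈ Λ) (hg : ∀ l ∈ Λ, conj (g (conj l)) = g l) :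
    IsFlatInterpolant Λ m (q.map (starRingEnd ℂ)) g := fun l hl ↦ by
  simpa [Polynomial.map_sub, Polynomial.map_pow, hg l hl] using
    Polynomial.map_dvd (starRingEnd ℂ) (hq _ (hΛ l hl))

theorem Matrix.map_conj_aeval {ι : Type*} [Fintype ι] [DecidableEq ι] (a : Matrix ι ι ℂ)
    (q : ℂ[X]) : (aeval a q).map conj = aeval (a.map conj) (q.map (starRingEnd ℂ)) := by
  rw [← RingHom.mapMatrix_apply, ← RingHom.mapMatrix_apply, aeval_def, aeval_def, hom_eval₂,
    eval₂_map]
  congr 1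
  ext c : 1
  simp [Matrix.algebraMap_eq_diagonal]

theorem map_conj_spectralCalculus {ι : Type*} [Fintype ι] [DecidableEq ι] {a : Matrix ι ι ℂ}
    (ha : aeval a (∏ l ∈ Λ, (X - C l) ^ m) = 0) (ha_real : a.map conj = a)
    (hΛ : ∀ l ∈ Λ, conj l ∈ Λ) (hg : ∀ l ∈ Λ, conj (g (conj l)) = g l) :
    (spectralCalculus ha g).map conj = spectralCalculus ha g := by
  obtain ⟨q, hq⟩ := exists_isFlatInterpolant Λ m g
  calc (spectralCalculus ha g).map conj = aeval a (q.map (starRingEnd ℂ)) := by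
        rw [spectralCalculus_eq_aeval ha hq, Matrix.map_conj_aeval, ha_real]
    _ = spectralCalculus ha g := (spectralCalculus_eq_aeval ha (hq.map_conj hΛ hg)).symm

end Conj

section Complexify

open ComplexConjugate
open scoped Matrix.Norms.L2Operator

theorem EuclideanSpace.norm_toLp_ofReal {ι : Type*} [Fintype ι] (v : ι → ℝ) :
    ‖(WithLp.toLp 2 fun i ↦ (v i : ℂ) : EuclideanSpace ℂ ι)‖ =
      ‖(WithLp.toLp 2 v : EuclideanSpace ℝ ι)‖ := by
  simp [EuclideanSpace.norm_eq]

variable {ι : Type*} [Fintype ι] [DecidableEq ι]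

noncomputable def complexifiedMatrix : Module.End ℝ (EuclideanSpace ℝ ι) →+* Matrix ι ι ℂ :=
  (algebraMap ℝ ℂ).mapMatrix.comp
    (LinearMap.toMatrixAlgEquiv (EuclideanSpace.basisFun ι ℝ).toBasis).toRingHom

theorem complexifiedMatrix_injective : Function.Injective (complexifiedMatrix (ι := ι)) :=
  (Matrix.map_injective (algebraMap ℝ ℂ).injective).comp (AlgEquiv.injective _)

theorem map_conj_complexifiedMatrix (f : Module.End ℝ (EuclideanSpace ℝ ι)) :
    (complexifiedMatrix f).map conj = complexifiedMatrix f := by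
  ext i j
  simp [complexifiedMatrix]

theorem exists_complexifiedMatrix_eq {N : Matrix ι ι ℂ} (hN : N.map conj = N) :
    ∃ f, complexifiedMatrix f = N := by
  refine ⟨(LinearMap.toMatrixAlgEquiv (EuclideanSpace.basisFun ι ℝ).toBasis).symm
    (N.map Complex.re), ?_⟩
  ext i j
  simpa [complexifiedMatrix] using Complex.conj_eq_iff_re.mp (congrFun₂ hN i j)

theorem norm_apply_le_norm_complexifiedMatrix (f : Module.End ℝ (EuclideanSpace ℝ ι))
    (x : EuclideanSpace ℝ ι) : ‖f x‖ ≤ ‖complexifiedMatrix f‖ * ‖x‖ := by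
  set b := (EuclideanSpace.basisFun ι ℝ).toBasis
  set N := LinearMap.toMatrix b b f
  have hfx : f x = WithLp.toLp 2 (N.mulVec x.ofLp) := by
    conv_lhs => rw [← Matrix.toLin_toMatrix b b f]
    rfl
  have hmap : (fun i ↦ ((N.mulVec x.ofLp i : ℝ) : ℂ)) =
      (complexifiedMatrix f).mulVec fun i ↦ (x i : ℂ) := by
    have hN : complexifiedMatrix f = N.map (algebraMap ℝ ℂ) := rfl
    rw [hN]
    exact funext (RingHom.map_mulVec (algebraMap ℝ ℂ) N x.ofLp)
  calc ‖f x‖ = ‖(WithLp.toLp 2 fun i ↦ ((N.mulVec x.ofLp i : ℝ) : ℂ) : EuclideanSpace ℂ ι)‖ := by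
        rw [EuclideanSpace.norm_toLp_ofReal, hfx]
    _ ≤ ‖complexifiedMatrix f‖ * ‖(WithLp.toLp 2 fun i ↦ (x i : ℂ) : EuclideanSpace ℂ ι)‖ := by
        rw [hmap]
        exact Matrix.l2_opNorm_mulVec (complexifiedMatrix f) (WithLp.toLp 2 fun i ↦ (x i : ℂ))
    _ = ‖complexifiedMatrix f‖ * ‖x‖ := by rw [EuclideanSpace.norm_toLp_ofReal]

noncomputable def complexifiedUnit :
    (EuclideanSpace ℝ ι ≃ₗ[ℝ] EuclideanSpace ℝ ι) →* (Matrix ι ι ℂ)ˣ :=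
  (Units.map (complexifiedMatrix (ι := ι) : _ →* Matrix ι ι ℂ)).comp
    (LinearMap.GeneralLinearGroup.generalLinearEquiv ℝ _).symm.toMonoidHom

theorem val_complexifiedUnit (S : EuclideanSpace ℝ ι ≃ₗ[ℝ] EuclideanSpace ℝ ι) :
    (complexifiedUnit S : Matrix ι ι ℂ) = complexifiedMatrix S.toLinearMap := rfl

theorem complexifiedUnit_injective : Function.Injective (complexifiedUnit (ι := ι)) :=
  fun S T h ↦ LinearEquiv.toLinearMap_injective <| complexifiedMatrix_injective <| by
    rw [← val_complexifiedUnit, ← val_complexifiedUnit, h]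

theorem exists_complexifiedUnit_eq {U : (Matrix ι ι ℂ)ˣ} (hU : (U : Matrix ι ι ℂ).map conj = U)
    (hU' : ((U⁻¹ : (Matrix ι ι ℂ)ˣ) : Matrix ι ι ℂ).map conj = ↑U⁻¹) :
    ∃ S, complexifiedUnit S = U := by
  obtain ⟨f, hf⟩ := exists_complexifiedMatrix_eq hU
  obtain ⟨f', hf'⟩ := exists_complexifiedMatrix_eq hU'
  refine ⟨LinearEquiv.ofLinearMap f f' ?_ ?_, Units.ext hf⟩
  · exact complexifiedMatrix_injective (show complexifiedMatrix (f * f') = complexifiedMatrix 1 by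
      rw [map_mul, hf, hf', Units.mul_inv, map_one])
  · exact complexifiedMatrix_injective (show complexifiedMatrix (f' * f) = complexifiedMatrix 1 by
      rw [map_mul, hf, hf', Units.inv_mul, map_one])

theorem norm_zpow_apply_le (S : EuclideanSpace ℝ ι ≃ₗ[ℝ] EuclideanSpace ℝ ι) (j : ℤ)
    (x : EuclideanSpace ℝ ι) :
    ‖(S ^ j) x‖ ≤ ‖((complexifiedUnit S ^ j : (Matrix ι ι ℂ)ˣ) : Matrix ι ι ℂ)‖ * ‖x‖ := by
  rw [← map_zpow, val_complexifiedUnit]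
  exact norm_apply_le_norm_complexifiedMatrix _ x

end Complexify

section Charpoly

open ComplexConjugate

variable {ι : Type*} [Fintype ι] [DecidableEq ι]

theorem Matrix.mem_charpoly_roots_toFinset_iff {K : Type*} [Field K] [DecidableEq K]
    (N : Matrix ι ι K) {l : K} : l ∈ N.charpoly.roots.toFinset ↔ l ∈ spectrum K N := by
  rw [Multiset.mem_toFinset, mem_roots N.charpoly_monic.ne_zero,
    Matrix.mem_spectrum_iff_isRoot_charpoly]

theorem Matrix.aeval_prod_charpoly_roots_pow_card_eq_zero {K : Type*} [Field K] [DecidableEq K]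
    [IsAlgClosed K] (N : Matrix ι ι K) :
    aeval N (∏ l ∈ N.charpoly.roots.toFinset, (X - C l) ^ Fintype.card ι) = 0 := by
  obtain ⟨t, ht⟩ : N.charpoly ∣ ∏ l ∈ N.charpoly.roots.toFinset, (X - C l) ^ Fintype.card ι := by
    conv_lhs => rw [(IsAlgClosed.splits _).eq_prod_roots_of_monic N.charpoly_monic,
      Finset.prod_multiset_map_count]
    refine Finset.prod_dvd_prod_of_dvd _ _ fun l _ ↦ pow_dvd_pow _ ?_
    calc N.charpoly.roots.count l ≤ Multiset.card N.charpoly.roots := Multiset.count_le_card _ _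
      _ ≤ N.charpoly.natDegree := card_roots' _
      _ = Fintype.card ι := N.charpoly_natDegree_eq_dim
  rw [ht, map_mul, aeval_self_charpoly, zero_mul]

theorem Matrix.conj_mem_spectrum {N : Matrix ι ι ℂ} (hN : N.map conj = N) {l : ℂ}
    (hl : l ∈ spectrum ℂ N) : conj l ∈ spectrum ℂ N := by
  rw [Matrix.mem_spectrum_iff_isRoot_charpoly] at hl ⊢
  rw [← hN, Matrix.charpoly_map]
  exact hl.map

end Charpoly

section Ball

variable {R E : Type*} [Semiring R] [SeminormedAddCommGroup E] [Module R E] {A S : E ≃ₗ[R] E}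
  {c : ℝ}

theorem image_zpow_ball_div_subset_image_mul_zpow_ball (hAS : Commute A S)
    (hS : ∀ (j : ℤ) x, ‖(S ^ j) x‖ ≤ c * ‖x‖) (hc : 0 < c) (j : ℤ) (r : ℝ) :
    (A ^ j) '' Metric.ball 0 (r / c) ⊆ ((A * S) ^ j) '' Metric.ball 0 r := by
  rintro _ ⟨x, hx, rfl⟩
  refine ⟨(S ^ (-j)) x, ?_, ?_⟩
  · rw [mem_ball_zero_iff] at hx ⊢
    calc ‖(S ^ (-j)) x‖ ≤ c * ‖x‖ := hS _ x
      _ < c * (r / c) := by gcongr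
      _ = r := mul_div_cancel₀ r hc.ne'
  · rw [hAS.mul_zpow, LinearEquiv.mul_apply, ← LinearEquiv.mul_apply (S ^ j), ← zpow_add,
      add_neg_cancel, zpow_zero]
    rfl

theorem image_mul_zpow_ball_subset_image_zpow_ball (hAS : Commute A S)
    (hS : ∀ (j : ℤ) x, ‖(S ^ j) x‖ ≤ c * ‖x‖) (hc : 0 < c) (j : ℤ) (r : ℝ) :
    ((A * S) ^ j) '' Metric.ball 0 r ⊆ (A ^ j) '' Metric.ball 0 (c * r) := by
  rintro _ ⟨x, hx, rfl⟩
  refine ⟨(S ^ j) x, ?_, by rw [hAS.mul_zpow, LinearEquiv.mul_apply]⟩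
  rw [mem_ball_zero_iff] at hx ⊢
  exact (hS j x).trans_lt (by gcongr)

end Ball

section Polar

open ComplexConjugate
open scoped Matrix.Norms.L2Operator

variable {ι : Type*} [Fintype ι] [DecidableEq ι]

theorem exists_commute_spectrum_pos_bounded_zpow
    (A : EuclideanSpace ℝ ι ≃ₗ[ℝ] EuclideanSpace ℝ ι) :
    ∃ S : EuclideanSpace ℝ ι ≃ₗ[ℝ] EuclideanSpace ℝ ι, Commute A S ∧
      (∀ z ∈ spectrum ℂ (complexifiedMatrix (A * S).toLinearMap), z.im = 0 ∧ 0 < z.re) ∧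
      ∃ c, 1 ≤ c ∧ ∀ (j : ℤ) x, ‖(S ^ j) x‖ ≤ c * ‖x‖ := by
  set N := complexifiedMatrix A.toLinearMap
  have hN : N.map conj = N := map_conj_complexifiedMatrix _
  set Λ := N.charpoly.roots.toFinset
  have ha := N.aeval_prod_charpoly_roots_pow_card_eq_zero
  have hΛ0 : ∀ l ∈ Λ, l ≠ 0 := by
    rintro l hl rfl
    exact (spectrum.zero_notMem_iff ℂ).mpr (complexifiedUnit A).isUnit
      (N.mem_charpoly_roots_toFinset_iff.mp hl)
  have hΛconj : ∀ l ∈ Λ, conj l ∈ Λ := fun l hl ↦ N.mem_charpoly_roots_toFinset_iff.mpr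
    (Matrix.conj_mem_spectrum hN (N.mem_charpoly_roots_toFinset_iff.mp hl))
  -- `F l = conj l / ‖l‖` undoes the phase of `l`: `l * F l = ‖l‖`.
  set F : ℂ → ℂ := fun z ↦ ‖z‖ / z
  have hF0 : ∀ l ∈ Λ, F l ≠ 0 := fun l hl ↦ div_ne_zero (by simpa using hΛ0 l hl) (hΛ0 l hl)
  have hF1 : ∀ l ∈ Λ, ‖F l‖ = 1 := fun l hl ↦ by
    simp [F, div_self (norm_ne_zero_iff.mpr (hΛ0 l hl))]
  have hFconj : ∀ l ∈ Λ, conj (F (conj l)) = F l := fun l _ ↦ by simp [F]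
  have hFconj' : ∀ l ∈ Λ, conj (F⁻¹ (conj l)) = F⁻¹ l := fun l _ ↦ by simp [F]
  obtain ⟨S, hS⟩ := exists_complexifiedUnit_eq (U := spectralCalculusUnit ha hF0)
    (map_conj_spectralCalculus ha hN hΛconj hFconj)
    (map_conj_spectralCalculus ha hN hΛconj hFconj')
  refine ⟨S, ?_, ?_, max 1 (∑ l ∈ Λ, ‖spectralCalculus ha (Pi.single l 1)‖), le_max_left _ _,
    fun j x ↦ ?_⟩
  · refine complexifiedUnit_injective (Units.ext ?_)
    simp only [map_mul, Units.val_mul, hS]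
    exact (commute_spectralCalculus ha F).eq
  · intro z hz
    rw [← val_complexifiedUnit, map_mul, Units.val_mul, hS] at hz
    obtain ⟨l, hl, rfl⟩ := spectrum_mul_spectralCalculus_subset ha F hz
    simp [F, mul_div_cancel₀ _ (hΛ0 l hl), hΛ0 l hl]
  · refine (norm_zpow_apply_le S j x).trans (mul_le_mul_of_nonneg_right ?_ (norm_nonneg x))
    rw [hS, val_spectralCalculusUnit_zpow]
    refine (norm_spectralCalculus_le ha fun l hl ↦ ?_).trans (le_max_right _ _)
    simp [hF1 l hl]

end Polar

/-- Let `A` be an invertible `n × n` matrix (a linear automorphism of `ℝⁿ`). Then there exist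
a constant `c ≥ 1` and a linear automorphism `Ã` all of whose (complex) eigenvalues are
positive real numbers, such that for all `j ∈ ℤ` and `r > 0`:
`A^j(B(0, r/c)) ⊆ Ã^j(B(0,r)) ⊆ A^j(B(0, c*r))`. -/
theorem stmt16 (n : ℕ)
    (A : EuclideanSpace ℝ (Fin n) ≃ₗ[ℝ] EuclideanSpace ℝ (Fin n)) :
    ∃ c : ℝ, 1 ≤ c ∧
      ∃ B : EuclideanSpace ℝ (Fin n) ≃ₗ[ℝ] EuclideanSpace ℝ (Fin n),
        (∀ z ∈ spectrum ℂ
            (((LinearMap.toMatrix (EuclideanSpace.basisFun (Fin n) ℝ).toBasis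
                (EuclideanSpace.basisFun (Fin n) ℝ).toBasis) B.toLinearMap).map
              (algebraMap ℝ ℂ)),
          z.im = 0 ∧ 0 < z.re) ∧
        ∀ (j : ℤ) (r : ℝ), 0 < r →
          (A ^ j) '' Metric.ball 0 (r / c) ⊆ (B ^ j) '' Metric.ball 0 r ∧
          (B ^ j) '' Metric.ball 0 r ⊆ (A ^ j) '' Metric.ball 0 (c * r) := by
  obtain ⟨S, hAS, hspec, c, hc, hS⟩ := exists_commute_spectrum_pos_bounded_zpow A
  have hc0 : 0 < c := one_pos.trans_le hc
  exact ⟨c, hc, A * S, hspec, fun j r _ ↦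
    ⟨image_zpow_ball_div_subset_image_mul_zpow_ball hAS hS hc0 j r,
      image_mul_zpow_ball_subset_image_zpow_ball hAS hS hc0 j r⟩⟩
end

section
/- Let A be an n×n matrix with |det A| > 1 that has a real eigenvalue λ with |λ| > 1 and eigenvector e₁ (in suitable coordinates). Then the set U = ((−|λ|,−1) ∪ (1,|λ|)) × ℝ^{n−1} tiles ℝⁿ by A-dilations, i.e., {A^j(U) : j ∈ ℤ} is a partition of ℝⁿ up to null sets. -/
/-!
Since `A` multiplies the first coordinate by `λ`, the dilate `A ^ j (U)` is the slab
`|x₀| ∈ (|λ| ^ j, |λ| ^ (j + 1))`. For `|x₀|` outside the countable set `{0} ∪ {|λ| ^ j}` exactly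
one such slab contains `x`, and the first coordinate of a.e. `x` avoids any countable set.
-/

open MeasureTheory Set

theorem mem_Ioo_neg_union_Ioo_iff_abs {b t : ℝ} :
    t ∈ Ioo (-b) (-1) ∪ Ioo 1 b ↔ |t| ∈ Ioo 1 b := by
  rcases le_or_gt 0 t with ht | ht
  · simp only [abs_of_nonneg ht, mem_union, mem_Ioo]
    constructor
    · rintro (h | h) <;> constructor <;> linarith [h.1, h.2]
    · exact Or.inr
  · simp only [abs_of_neg ht, mem_union, mem_Ioo]
    constructor
    · rintro (h | h) <;> constructor <;> linarith [h.1, h.2]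
    · exact fun h => Or.inl ⟨by linarith [h.2], by linarith [h.1]⟩

theorem LinearEquiv.zpow_apply_of_map_eq_mul {K V : Type*} [Field K] [AddCommGroup V] [Module K V]
    (A : V ≃ₗ[K] V) {f : V → K} {c : K} (hc : c ≠ 0) (hf : ∀ x, f (A x) = c * f x)
    (j : ℤ) (x : V) : f ((A ^ j) x) = c ^ j * f x := by
  induction j using Int.induction_on generalizing x with
  | zero => simp
  | succ n ih =>
    rw [zpow_add_one, LinearEquiv.mul_apply, ih, hf, zpow_add_one₀ hc]
    ring
  | pred n ih =>
    have hinv : f (A⁻¹ x) = c⁻¹ * f x := by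
      rw [eq_inv_mul_iff_mul_eq₀ hc, ← hf]
      exact congrArg f (A.apply_symm_apply x)
    rw [zpow_sub_one, LinearEquiv.mul_apply, ih, hinv, zpow_sub_one₀ hc]
    ring

theorem LinearEquiv.mem_zpow_image_abs_Ioo_iff {V : Type*} [AddCommGroup V] [Module ℝ V]
    (A : V ≃ₗ[ℝ] V) {f : V → ℝ} {c : ℝ} (hc : c ≠ 0) (hf : ∀ x, f (A x) = c * f x)
    (j : ℤ) (x : V) :
    x ∈ (A ^ j) '' {y | |f y| ∈ Ioo 1 |c|} ↔ |f x| ∈ Ioo (|c| ^ j) (|c| ^ (j + 1)) := by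
  have hpos : 0 < |c| ^ j := zpow_pos (abs_pos.2 hc) j
  have hinv : (A ^ j).symm x = (A ^ (-j)) x := by
    rw [zpow_neg]; rfl
  rw [LinearEquiv.image_eq_preimage_symm, mem_preimage, mem_ofPred_eq, hinv,
    A.zpow_apply_of_map_eq_mul hc hf, abs_mul, abs_zpow, zpow_neg, mem_Ioo, mem_Ioo,
    one_lt_inv_mul₀ hpos, inv_mul_lt_iff₀ hpos, zpow_add_one₀ (abs_ne_zero.2 hc)]

theorem existsUnique_zpow_lt_lt {b t : ℝ} (hb : 1 < b) (ht : 0 < t) (hne : ∀ j : ℤ, t ≠ b ^ j) :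
    ∃! j : ℤ, t ∈ Ioo (b ^ j) (b ^ (j + 1)) := by
  obtain ⟨j, hj⟩ := exists_mem_Ico_zpow ht hb
  refine ⟨j, ⟨lt_of_le_of_ne hj.1 (hne j).symm, hj.2⟩, fun k hk => ?_⟩
  have hkj : b ^ k < b ^ (j + 1) := hk.1.trans hj.2
  have hjk : b ^ j < b ^ (k + 1) := (lt_of_le_of_ne hj.1 (hne j).symm).trans hk.2
  rw [zpow_lt_zpow_iff_right₀ hb] at hkj hjk
  omega

theorem Real.ae_abs_ne (c : ℝ) : ∀ᵐ t : ℝ, |t| ≠ c := by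
  refine measure_mono_null (fun t ht => ?_) ((toFinite {c, -c}).measure_zero volume)
  obtain rfl : |t| = c := not_not.1 ht
  rcases abs_choice t with h | h <;> rw [h] <;> simp

theorem stmt17_general (m : ℕ)
    (A : (Fin (m + 1) → ℝ) ≃ₗ[ℝ] (Fin (m + 1) → ℝ))
    (lam : ℝ) (hlam : 1 < |lam|)
    (hrow : ∀ x : Fin (m + 1) → ℝ, A x 0 = lam * x 0)
    (U : Set (Fin (m + 1) → ℝ))
    (hU : U = {x : Fin (m + 1) → ℝ |
      x 0 ∈ Set.Ioo (-|lam|) (-1) ∪ Set.Ioo 1 |lam|}) :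
    ∀ᵐ x : Fin (m + 1) → ℝ, ∃! j : ℤ, x ∈ (A ^ j) '' U := by
  have hlam0 : lam ≠ 0 := abs_pos.1 (one_pos.trans hlam)
  have hU' : U = {x | |x 0| ∈ Ioo 1 |lam|} := by
    simp only [hU, mem_Ioo_neg_union_Ioo_iff_abs]
  have hcoord :=
    Measure.quasiMeasurePreserving_eval (fun _ : Fin (m + 1) => (volume : Measure ℝ)) 0
  filter_upwards [hcoord.ae (Real.ae_abs_ne 0),
    hcoord.ae (ae_all_iff.2 fun j : ℤ => Real.ae_abs_ne (|lam| ^ j))] with x hx0 hxpow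
  simp only [hU', A.mem_zpow_image_abs_Ioo_iff (f := fun x => x 0) hlam0 hrow]
  exact existsUnique_zpow_lt_lt hlam ((abs_nonneg _).lt_of_ne' hx0) hxpow

/-- Let `A` be an invertible matrix on `ℝⁿ` (`n = m+1 ≥ 1`) with `|det A| > 1`, having a real
eigenvalue `λ` with `|λ| > 1` and eigenvector `e₁`, in coordinates where `A` acts on the
first coordinate by multiplication by `λ`. Then
`U = ((−|λ|, −1) ∪ (1, |λ|)) × ℝ^{n−1}` tiles `ℝⁿ` by `A`-dilations: for a.e. `x` there is a
unique `j ∈ ℤ` with `x ∈ A^j(U)`. -/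
theorem stmt17 (m : ℕ)
    (A : (Fin (m + 1) → ℝ) ≃ₗ[ℝ] (Fin (m + 1) → ℝ))
    (hdet : 1 < |LinearMap.det A.toLinearMap|)
    (lam : ℝ) (hlam : 1 < |lam|)
    (heig : A (Pi.single 0 1) = lam • (Pi.single 0 1 : Fin (m + 1) → ℝ))
    (hrow : ∀ x : Fin (m + 1) → ℝ, A x 0 = lam * x 0)
    (U : Set (Fin (m + 1) → ℝ))
    (hU : U = {x : Fin (m + 1) → ℝ |
      x 0 ∈ Set.Ioo (-|lam|) (-1) ∪ Set.Ioo 1 |lam|}) :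
    ∀ᵐ x : Fin (m + 1) → ℝ, ∃! j : ℤ, x ∈ (A ^ j) '' U :=
  stmt17_general m A lam hlam hrow U hU
end

section
/- Let A be the 3×3 diagonal matrix diag(10, 1/2, 1/2) and Γ the lattice spanned over ℤ by (1,0,0), (α,1,0), (β,0,1), where α, β are reals such that for all sufficiently large j there exist integers a, b, N with |N + aα + bβ| < 11^{−j} and 0 < max(|a|,|b|) < j. Then for all sufficiently large j, the number of lattice points of Γ in A^{−j}([−1,1]³) is at least (11/10)^j; in particular ∑_{j≥1} 1/#(A^{−j}([−1,1]³) ∩ Γ) < ∞. -/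
private lemma nat_le_pow2011 : ∀ j : ℕ, 1 ≤ j → (j : ℝ) ≤ (20/11) ^ j := by
  intro j
  induction j with
  | zero => intro h; simp at h
  | succ n ih =>
    intro _
    rcases Nat.eq_zero_or_pos n with hn | hn
    · subst hn; norm_num
    · have h1 := ih hn
      have h2 : (20/11:ℝ)^1 ≤ (20/11)^n := pow_le_pow_right₀ (by norm_num) hn
      push_cast
      have h3 : (20/11:ℝ)^(n+1) = (20/11)^n + (9/11) * (20/11)^n := by ring
      rw [h3]
      have : (1:ℝ) ≤ (9/11) * (20/11)^n := by
        simp only [pow_one] at h2; nlinarith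
      linarith

private lemma cond_iff (x : Fin 3 → ℝ) (j : ℕ) :
    (∀ i, ((Matrix.diagonal ![10, 1/2, 1/2] : Matrix (Fin 3) (Fin 3) ℝ) ^ j).mulVec x i ∈ Set.Icc (-1 : ℝ) 1) ↔
    (|(10:ℝ)^j * x 0| ≤ 1 ∧ |(1/2:ℝ)^j * x 1| ≤ 1 ∧ |(1/2:ℝ)^j * x 2| ≤ 1) := by
  rw [Matrix.diagonal_pow]
  simp only [Matrix.mulVec_diagonal, Set.mem_Icc, ← abs_le, Fin.forall_fin_succ,
    Fin.forall_fin_one, Pi.pow_apply]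
  norm_num [Fin.succ]
  exact fun _ _ => Iff.rfl

/-- Example: let `A = diag(10, 1/2, 1/2)` and let `Γ` be the lattice spanned over `ℤ` by
`(1,0,0)`, `(α,1,0)`, `(β,0,1)`, where for all sufficiently large `j` there are integers
`a, b, N` with `|N + aα + bβ| < 11^{-j}` and `0 < max(|a|,|b|) < j`. Then for all
sufficiently large `j`, `#(A^{-j}([-1,1]³) ∩ Γ) ≥ (11/10)^j`; in particular
`∑_j 1/#(A^{-j}([-1,1]³) ∩ Γ) < ∞`. -/
theorem stmt18 (α β : ℝ)
    (hαβ : ∃ J₀ : ℕ, ∀ j : ℕ, J₀ ≤ j → ∃ a b N : ℤ,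
      |(N : ℝ) + a * α + b * β| < (11 : ℝ) ^ (-(j : ℤ)) ∧
      0 < max |a| |b| ∧ max |a| |b| < j)
    (A : Matrix (Fin 3) (Fin 3) ℝ)
    (hA : A = Matrix.diagonal ![10, 1/2, 1/2])
    (Γ : Set (Fin 3 → ℝ))
    (hΓ : Γ = {v : Fin 3 → ℝ | ∃ N a b : ℤ,
      v = ![(N : ℝ) + a * α + b * β, (a : ℝ), (b : ℝ)]})
    (S : ℕ → Set (Fin 3 → ℝ))
    (hS : ∀ j, S j = {x : Fin 3 → ℝ |
      (∀ i, (A ^ j).mulVec x i ∈ Set.Icc (-1 : ℝ) 1) ∧ x ∈ Γ}) :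
    (∃ J₁ : ℕ, ∀ j : ℕ, J₁ ≤ j → ((11 : ℝ) / 10) ^ j ≤ ((S j).ncard : ℝ)) ∧
      Summable (fun j : ℕ => 1 / ((S j).ncard : ℝ)) := by
  subst hA hΓ
  obtain ⟨J₀, hJ₀⟩ := hαβ
  have hmem : ∀ (j : ℕ) (x : Fin 3 → ℝ), x ∈ S j ↔
      ((|(10:ℝ)^j * x 0| ≤ 1 ∧ |(1/2:ℝ)^j * x 1| ≤ 1 ∧ |(1/2:ℝ)^j * x 2| ≤ 1) ∧
        ∃ N a b : ℤ, x = ![(N : ℝ) + a * α + b * β, (a : ℝ), (b : ℝ)]) := by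
    intro j x
    rw [hS j]
    exact and_congr_left' (cond_iff x j)
  -- finiteness of each S j
  have hfin : ∀ j : ℕ, (S j).Finite := by
    intro j
    set C : ℤ := ⌈(1:ℝ) + 2^j*|α| + 2^j*|β|⌉ with hC
    have hsub : S j ⊆ (fun p : ℤ×ℤ×ℤ => ![(p.1:ℝ) + p.2.1*α + p.2.2*β, (p.2.1:ℝ), (p.2.2:ℝ)]) ''
        (Set.Icc (-C) C ×ˢ Set.Icc (-(2^j:ℤ)) (2^j) ×ˢ Set.Icc (-(2^j:ℤ)) (2^j)) := by
      intro x hx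
      rw [hmem] at hx
      obtain ⟨⟨h0, h1, h2⟩, N', a', b', rfl⟩ := hx
      simp only [Matrix.cons_val_zero, Matrix.cons_val_one, Matrix.head_cons,
        Matrix.cons_val_two, Matrix.tail_cons] at h0 h1 h2
      have h2p : (0:ℝ) < 2^j := by positivity
      have h10p : (0:ℝ) < 10^j := by positivity
      have habs : ∀ c : ℤ, |(1/2:ℝ)^j * (c:ℝ)| ≤ 1 → |c| ≤ (2^j : ℤ) := by
        intro c hc
        have e1 : |(1/2:ℝ)^j * (c:ℝ)| = ((2:ℝ)^j)⁻¹ * |(c:ℝ)| := by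
          rw [abs_mul, abs_of_nonneg (by positivity : (0:ℝ) ≤ (1/2:ℝ)^j), one_div, inv_pow]
        rw [e1] at hc
        have h3 : |(c:ℝ)| ≤ 2^j := by
          have := mul_inv_cancel₀ (ne_of_gt h2p)
          nlinarith
        have : ((|c| : ℤ) : ℝ) ≤ ((2^j : ℤ) : ℝ) := by push_cast [Int.cast_abs] at *; linarith [h3]
        exact_mod_cast this
      have hNb : |N'| ≤ C := by
        have hsum : |(N':ℝ) + a'*α + b'*β| ≤ 1 := by
          rw [abs_mul, abs_of_nonneg h10p.le] at h0
          nlinarith [abs_nonneg ((N':ℝ) + a'*α + b'*β), one_le_pow₀ (by norm_num : (1:ℝ) ≤ 10) (n := j)]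
        have ha2 : |(a':ℝ)| ≤ 2^j := by
          have := habs a' h1
          calc |(a':ℝ)| = ((|a'|:ℤ):ℝ) := (Int.cast_abs).symm
            _ ≤ ((2^j:ℤ):ℝ) := by exact_mod_cast this
            _ = 2^j := by push_cast; ring
        have hb2 : |(b':ℝ)| ≤ 2^j := by
          have := habs b' h2
          calc |(b':ℝ)| = ((|b'|:ℤ):ℝ) := (Int.cast_abs).symm
            _ ≤ ((2^j:ℤ):ℝ) := by exact_mod_cast this
            _ = 2^j := by push_cast; ring
        have hN : |(N':ℝ)| ≤ 1 + 2^j*|α| + 2^j*|β| := by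
          have hA' : |(a':ℝ)*α| ≤ 2^j*|α| := by
            rw [abs_mul]; exact mul_le_mul_of_nonneg_right ha2 (abs_nonneg α)
          have hB' : |(b':ℝ)*β| ≤ 2^j*|β| := by
            rw [abs_mul]; exact mul_le_mul_of_nonneg_right hb2 (abs_nonneg β)
          have u1 := abs_le.mp hsum
          have u2 := abs_le.mp hA'
          have u3 := abs_le.mp hB'
          rw [abs_le]; constructor <;> linarith
        have hcast : ((|N'|:ℤ):ℝ) ≤ (C:ℝ) := by
          rw [Int.cast_abs]; exact hN.trans (Int.le_ceil _)
        exact_mod_cast hcast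
      exact ⟨(N', a', b'), ⟨by simpa [Set.mem_Icc] using abs_le.mp hNb,
        by simpa [Set.mem_Icc] using abs_le.mp (habs a' h1),
        by simpa [Set.mem_Icc] using abs_le.mp (habs b' h2)⟩, rfl⟩
    exact Set.Finite.subset (((Set.finite_Icc _ _).prod
      ((Set.finite_Icc _ _).prod (Set.finite_Icc _ _))).image _) hsub
  -- main counting estimate
  have key : ∀ j : ℕ, max J₀ 1 ≤ j → ((11:ℝ)/10)^j ≤ ((S j).ncard : ℝ) := by
    intro j hj
    have hj1 : 1 ≤ j := le_trans (le_max_right _ _) hj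
    obtain ⟨a, b, N, hθ, hab0, habj⟩ := hJ₀ j (le_trans (le_max_left _ _) hj)
    set θ : ℝ := (N:ℝ) + a*α + b*β with hθdef
    have hθ' : |θ| ≤ ((11:ℝ)^j)⁻¹ := by
      rw [zpow_neg, zpow_natCast] at hθ; exact hθ.le
    set M : ℕ := ⌊((11:ℝ)/10)^j⌋₊ with hM
    have hMle : (M:ℝ) ≤ (11/10)^j := Nat.floor_le (by positivity)
    have haj : |(a:ℝ)| ≤ (j:ℝ) := by
      have h := (le_of_lt (lt_of_le_of_lt (le_max_left _ _) habj) : |a| ≤ (j:ℤ))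
      rw [← Int.cast_abs]; exact_mod_cast h
    have hbj : |(b:ℝ)| ≤ (j:ℝ) := by
      have h := (le_of_lt (lt_of_le_of_lt (le_max_right _ _) habj) : |b| ≤ (j:ℤ))
      rw [← Int.cast_abs]; exact_mod_cast h
    set f : ℕ → Fin 3 → ℝ := fun k => ![(k:ℝ)*θ, (k:ℝ)*a, (k:ℝ)*b] with hf
    have hinj : Function.Injective f := by
      have hab : (a:ℝ) ≠ 0 ∨ (b:ℝ) ≠ 0 := by
        rcases lt_max_iff.mp hab0 with h | h
        · exact Or.inl (by exact_mod_cast abs_pos.mp h)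
        · exact Or.inr (by exact_mod_cast abs_pos.mp h)
      intro k l hkl
      rcases hab with h | h
      · have h1 : (k:ℝ)*a = (l:ℝ)*a := by
          have := congrFun hkl 1
          simpa [hf] using this
        exact_mod_cast mul_right_cancel₀ h h1
      · have h1 : (k:ℝ)*b = (l:ℝ)*b := by
          have := congrFun hkl 2
          simpa [hf] using this
        exact_mod_cast mul_right_cancel₀ h h1
    have h2j : ((11:ℝ)/10)^j * j ≤ 2^j := by
      have hnl := nat_le_pow2011 j hj1
      calc ((11:ℝ)/10)^j * j ≤ (11/10)^j * (20/11)^j :=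
            mul_le_mul_of_nonneg_left hnl (by positivity)
        _ = 2^j := by rw [← mul_pow]; norm_num
    have hfS : ∀ k : ℕ, k ≤ M → f k ∈ S j := by
      intro k hk
      have hk' : (k:ℝ) ≤ (11/10)^j := le_trans (by exact_mod_cast hk) hMle
      have hknn : (0:ℝ) ≤ (k:ℝ) := Nat.cast_nonneg k
      rw [hmem]
      have hcomp : ∀ c : ℝ, |c| ≤ (j:ℝ) → |(1/2:ℝ)^j * ((k:ℝ)*c)| ≤ 1 := by
        intro c hc
        have h1 : (k:ℝ)*|c| ≤ (11/10)^j * j :=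
          mul_le_mul hk' hc (abs_nonneg _) (by positivity)
        have e : |(1/2:ℝ)^j * ((k:ℝ)*c)| = (1/2)^j * ((k:ℝ)*|c|) := by
          rw [abs_mul, abs_mul, abs_of_nonneg (by positivity : (0:ℝ) ≤ (1/2:ℝ)^j),
            abs_of_nonneg hknn]
        rw [e]
        calc ((1/2:ℝ))^j * ((k:ℝ)*|c|) ≤ (1/2)^j * 2^j := by
              apply mul_le_mul_of_nonneg_left (h1.trans h2j) (by positivity)
          _ = 1 := by rw [← mul_pow]; norm_num
      refine ⟨⟨?_, ?_, ?_⟩, k*N, k*a, k*b, ?_⟩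
      · have h1 : (k:ℝ) * |θ| ≤ (11/10)^j * (11^j)⁻¹ :=
          mul_le_mul hk' hθ' (abs_nonneg _) (by positivity)
        have h2 : ((11:ℝ)/10)^j * ((11:ℝ)^j)⁻¹ = ((10:ℝ)^j)⁻¹ := by
          rw [div_pow]; field_simp
        have e : |(10:ℝ)^j * (f k 0)| = 10^j * ((k:ℝ)*|θ|) := by
          simp only [hf, Matrix.cons_val_zero]
          rw [abs_mul, abs_mul, abs_of_nonneg (by positivity : (0:ℝ) ≤ (10:ℝ)^j),
            abs_of_nonneg hknn]
        rw [e]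
        calc (10:ℝ)^j * ((k:ℝ)*|θ|) ≤ 10^j * ((10^j)⁻¹) := by
              apply mul_le_mul_of_nonneg_left (h2 ▸ h1) (by positivity)
          _ = 1 := mul_inv_cancel₀ (by positivity)
      · have := hcomp (a:ℝ) haj
        simpa [hf] using this
      · have := hcomp (b:ℝ) hbj
        simpa [hf] using this
      · funext i
        fin_cases i <;> simp [hf, hθdef] <;> push_cast <;> ring
    have hss : f '' ↑(Finset.Iic M) ⊆ S j := by
      rintro _ ⟨k, hk, rfl⟩
      exact hfS k (by simpa using hk)
    have hcard : M + 1 ≤ (S j).ncard := by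
      have h1 : (f '' ↑(Finset.Iic M)).ncard = M + 1 := by
        rw [Set.ncard_image_of_injective _ hinj, Set.ncard_coe_finset, Nat.card_Iic]
      calc M + 1 = (f '' ↑(Finset.Iic M)).ncard := h1.symm
        _ ≤ (S j).ncard := Set.ncard_le_ncard hss (hfin j)
    calc ((11:ℝ)/10)^j ≤ (M:ℝ) + 1 := (Nat.lt_floor_add_one _).le
      _ ≤ ((S j).ncard : ℝ) := by exact_mod_cast hcard
  set J₁ := max J₀ 1 with hJ₁
  refine ⟨⟨J₁, key⟩, ?_⟩
  have hsum : Summable (fun n : ℕ => ((11:ℝ)/10)^J₁ * (10/11)^n) :=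
    (summable_geometric_of_lt_one (by norm_num) (by norm_num)).mul_left _
  apply Summable.of_nonneg_of_le (fun n => by positivity) _ hsum
  intro n
  by_cases hn : J₁ ≤ n
  · have h := key n hn
    have hc : (0:ℝ) < ((S n).ncard : ℝ) := lt_of_lt_of_le (by positivity) h
    have hprod : ((10:ℝ)/11)^n * ((11:ℝ)/10)^n = 1 := by rw [← mul_pow]; norm_num
    have h1 : 1/((S n).ncard:ℝ) ≤ (10/11)^n := by
      rw [div_le_iff₀ hc]
      nlinarith [pow_pos (show (0:ℝ) < 10/11 by norm_num) n]
    calc 1/((S n).ncard:ℝ) ≤ (10/11)^n := h1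
      _ ≤ (11/10)^J₁ * (10/11)^n :=
        le_mul_of_one_le_left (by positivity) (one_le_pow₀ (by norm_num))
  · push_neg at hn
    have h1 : 1/((S n).ncard:ℝ) ≤ 1 := by
      rcases Nat.eq_zero_or_pos (S n).ncard with h | h
      · simp [h]
      · rw [div_le_one (by exact_mod_cast h)]; exact_mod_cast h
    have hmono : ((10:ℝ)/11)^J₁ ≤ (10/11)^n :=
      pow_le_pow_of_le_one (by norm_num) (by norm_num) hn.le
    have hprod : ((11:ℝ)/10)^J₁ * ((10:ℝ)/11)^J₁ = 1 := by rw [← mul_pow]; norm_num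
    have h2 : (1:ℝ) ≤ (11/10)^J₁ * (10/11)^n := by
      nlinarith [pow_pos (show (0:ℝ) < 11/10 by norm_num) J₁]
    linarith
end
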